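/- arXiv:math/0601694 — 6 statements merged into one kernel-verified Lean document; each statement's English description precedes it below -/
import Mathlib

section
/- For each non-negative integer n, the polynomial identity (x+y+n)^n = Σ_{i+j=n} C(n,i) · h_i(x) · (y+j)^j holds, where h_k(x) = x(x+k)^{k-1} for k ≥ 1 and h_0(x) = 1. -/
/-- The Abel polynomials: `h 0 x = 1` and `h k x = x * (x + k)^(k-1)` for `k ≥ 1`. -/
def habel {A : Type*} [CommRing A] : ℕ → A → A
  | 0, _ => 1
  | (m + 1), x => x * (x + ((m + 1 : ℕ) : A)) ^ m

open Polynomial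

/-! Replace `x` and `y` by the generic commuting pair `X`, `C X` in `ℤ[X][X]` and
induct on `n`. Differentiating in `X` turns the degree `n + 1` identity into `n + 1` times the
degree `n` one at `x + 1` (because `h_{k+1}' = (k + 1) h_k(x + 1)` and
`C(n+1,k+1) (k+1) = (n+1) C(n,k)`), and at `x = 0` only the term `i = 0` survives, giving
`(y + n + 1)^(n+1)` on both sides. Over the torsion-free ring `ℤ[X]` this determines the
polynomial. Evaluation then gives the identity in every commutative ring. -/

theorem Polynomial.eq_of_derivative_eq_of_eval_zero_eq {R : Type*} [Ring R] [IsAddTorsionFree R]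
    {p q : R[X]} (hd : derivative p = derivative q) (h0 : p.eval 0 = q.eval 0) : p = q := by
  have hC := eq_C_of_derivative_eq_zero (p := p - q) (by rw [derivative_sub, hd, sub_self])
  rw [coeff_zero_eq_eval_zero, eval_sub, h0, sub_self, map_zero] at hC
  exact sub_eq_zero.mp hC

section Abel

variable {A B : Type*} [CommRing A] [CommRing B]

theorem map_habel (f : A →+* B) (k : ℕ) (x : A) : f (habel k x) = habel k (f x) := by
  cases k <;> simp [habel]

theorem derivative_habel_succ (k : ℕ) :
    derivative (habel (k + 1) (X : A[X])) = ((k : A[X]) + 1) * habel k (X + 1) := by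
  cases k with
  | zero => simp [habel]
  | succ m =>
    simp only [habel, derivative_mul, derivative_pow, derivative_add, derivative_X,
      derivative_natCast, Nat.add_sub_cancel, C_eq_natCast]
    push_cast
    ring

def abelSum (n : ℕ) (x y : A) : A :=
  ∑ i ∈ Finset.range (n + 1), (n.choose i : A) * habel i x * (y + ((n - i : ℕ) : A)) ^ (n - i)

theorem map_abelSum (f : A →+* B) (n : ℕ) (x y : A) :
    f (abelSum n x y) = abelSum n (f x) (f y) := by
  simp [abelSum, map_habel]

theorem abelSum_zero_left (n : ℕ) (y : A) : abelSum n 0 y = (y + n) ^ n := by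
  rw [abelSum, Finset.sum_range_succ']
  simp [habel]

theorem derivative_abelSum_succ (n : ℕ) (y : A) :
    derivative (abelSum (n + 1) X (C y)) = ((n : A[X]) + 1) * abelSum n (X + 1) (C y) := by
  rw [abelSum, abelSum, derivative_sum, Finset.sum_range_succ', Finset.mul_sum]
  simp only [habel.eq_1, derivative_habel_succ, derivative_mul, derivative_one,
    derivative_natCast, derivative_pow, derivative_add, derivative_C, zero_mul, mul_zero,
    add_zero, zero_add]
  refine Finset.sum_congr rfl fun j _ => ?_
  rw [Nat.succ_sub_succ]
  have hchoose := congrArg (Nat.cast : ℕ → A[X]) (Nat.add_one_mul_choose_eq n j)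
  push_cast at hchoose
  linear_combination -(habel j (X + 1) * (C y + ((n - j : ℕ) : A[X])) ^ (n - j)) * hchoose

theorem abelSum_eq_of_abelSum_X_C_X {n : ℕ}
    (h : abelSum n (X : ℤ[X][X]) (C X) = (X + C X + (n : ℤ[X][X])) ^ n) (x y : A) :
    abelSum n x y = (x + y + n) ^ n := by
  simpa [map_abelSum, eval₂_pow] using
    congrArg (eval₂RingHom (eval₂RingHom (Int.castRingHom A) y) x) h

theorem abelSum_X_C_X (n : ℕ) :
    abelSum n (X : ℤ[X][X]) (C X) = (X + C X + (n : ℤ[X][X])) ^ n := by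
  induction n with
  | zero => simp [abelSum, habel]
  | succ n ih =>
    refine eq_of_derivative_eq_of_eval_zero_eq ?_ ?_
    · rw [derivative_abelSum_succ, abelSum_eq_of_abelSum_X_C_X ih]
      simp only [derivative_pow, derivative_add, derivative_X, derivative_C, derivative_natCast,
        C_eq_natCast]
      push_cast
      ring
    · rw [← coe_evalRingHom, map_abelSum]
      simp [abelSum_zero_left]

end Abel

/-- Abel's first identity: `(x+y+n)^n = ∑_{i+j=n} C(n,i) h_i(x) (y+j)^j`. -/
theorem abel_first_identity {A : Type*} [CommRing A] (n : ℕ) (x y : A) :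
    (x + y + (n : A)) ^ n =
      ∑ i ∈ Finset.range (n + 1),
        (n.choose i : A) * habel i x * (y + ((n - i : ℕ) : A)) ^ (n - i) :=
  (abelSum_eq_of_abelSum_X_C_X (abelSum_X_C_X n) x y).symm
end

section
/- For each non-negative integer n, the polynomial identity h_n(x+y) = Σ_{i+j=n} C(n,i) · h_i(x) · h_j(y) holds, where h_k(x) = x(x+k)^{k-1} for k ≥ 1 and h_0(x) = 1. -/
lemma habel_map {A B : Type*} [CommRing A] [CommRing B] (φ : A →+* B) (n : ℕ) (x : A) :
    φ (habel n x) = habel n (φ x) := by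
  cases n with
  | zero => simp [habel]
  | succ m => simp [habel, map_natCast]

lemma habel_zero {A : Type*} [CommRing A] (k : ℕ) : habel (k + 1) (0 : A) = 0 := by
  simp [habel]

open Polynomial in
lemma habel_eval {S : Type*} [CommRing S] (r : S) (k : ℕ) (p : S[X]) :
    eval r (habel k p) = habel k (eval r p) := by
  simpa using habel_map (evalRingHom r) k p

open Polynomial in
lemma habel_C_derivative {S : Type*} [CommRing S] (k : ℕ) (c : S) :
    derivative (habel k (C c) : S[X]) = 0 := by
  rw [← habel_map (C : S →+* S[X])]
  simp

open Polynomial in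
lemma habel_derivative {S : Type*} [CommRing S] (k : ℕ) (q : S[X]) (hq : derivative q = 1) :
    derivative (habel (k + 1) q) = (k + 1 : ℕ) * habel k (q + 1) := by
  cases k with
  | zero => simp [habel, hq]
  | succ m =>
    show derivative (q * (q + ((m + 2 : ℕ) : S[X])) ^ (m + 1)) = _
    have h2 : derivative (q + ((m + 2 : ℕ) : S[X])) = 1 := by simp [hq]
    rw [derivative_mul, derivative_pow_succ, hq, h2]
    show _ = ((m + 2 : ℕ) : S[X]) * ((q + 1) * ((q + 1) + ((m + 1 : ℕ) : S[X])) ^ m)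
    have h3 : (q + 1) + ((m + 1 : ℕ) : S[X]) = q + ((m + 2 : ℕ) : S[X]) := by
      push_cast; ring
    rw [h3]
    simp only [C_add, C_1, map_natCast]
    push_cast
    ring

open Polynomial in
lemma key (n : ℕ) :
    habel n ((X : (ℤ[X])[X]) + C (X : ℤ[X])) =
      ∑ i ∈ Finset.range (n + 1),
        (n.choose i : (ℤ[X])[X]) * habel i X * habel (n - i) (C (X : ℤ[X])) := by
  induction n with
  | zero => simp [habel]
  | succ n ih =>
    have ihs : habel n ((X : (ℤ[X])[X]) + 1 + C (X : ℤ[X])) =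
        ∑ i ∈ Finset.range (n + 1),
          (n.choose i : (ℤ[X])[X]) * habel i (X + 1) * habel (n - i) (C (X : ℤ[X])) := by
      have := congrArg (Polynomial.eval₂RingHom (C : ℤ[X] →+* (ℤ[X])[X]) (X + 1)) ih
      simpa [habel_map, map_sum, map_mul, map_natCast, add_right_comm] using this
    set L : (ℤ[X])[X] := habel (n + 1) (X + C (X : ℤ[X])) with hL
    set R : (ℤ[X])[X] := ∑ i ∈ Finset.range (n + 2),
        ((n+1).choose i : (ℤ[X])[X]) * habel i X * habel (n + 1 - i) (C (X : ℤ[X])) with hR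
    have hderiv : derivative (L - R) = 0 := by
      have hdL : derivative L = ((n + 1 : ℕ) : (ℤ[X])[X]) * habel n (X + 1 + C (X : ℤ[X])) := by
        rw [hL, habel_derivative n (X + C (X : ℤ[X])) (by simp)]
        ring_nf
      have hdR : derivative R = ((n + 1 : ℕ) : (ℤ[X])[X]) * habel n (X + 1 + C (X : ℤ[X])) := by
        rw [hR, map_sum]
        have hterm : ∀ i ∈ Finset.range (n + 2),
            derivative (((n+1).choose i : (ℤ[X])[X]) * habel i X * habel (n + 1 - i) (C (X : ℤ[X]))) =
            ((((n+1).choose i : ℕ) * i : ℕ) : (ℤ[X])[X]) *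
              (if i = 0 then 0 else habel (i - 1) (X + 1)) * habel (n + 1 - i) (C (X : ℤ[X])) := by
          intro i _
          cases i with
          | zero =>
            rw [derivative_mul, derivative_mul, habel_C_derivative]
            simp [habel]
          | succ j =>
            rw [derivative_mul, derivative_mul, habel_C_derivative,
              habel_derivative j X (by simp)]
            simp only [derivative_natCast, zero_mul, mul_zero, add_zero, zero_add,
              if_neg (Nat.succ_ne_zero j), Nat.add_sub_cancel]
            push_cast
            ring
        rw [Finset.sum_congr rfl hterm]
        rw [Finset.sum_range_succ']
        simp only [if_pos rfl, mul_zero, zero_mul, add_zero, Nat.cast_zero, mul_zero]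
        rw [ihs, Finset.mul_sum]
        apply Finset.sum_congr rfl
        intro j hj
        have h1 : (n + 1).choose (j + 1) * (j + 1) = (n + 1) * n.choose j := by
          rw [Nat.add_one_mul_choose_eq]; try ring
        have h2 : (((n+1).choose (j+1) * (j+1) : ℕ) : (ℤ[X])[X]) =
            ((n + 1 : ℕ) : (ℤ[X])[X]) * ((n.choose j : ℕ) : (ℤ[X])[X]) := by
          rw [h1]; push_cast; try ring
        simp only [if_neg (Nat.succ_ne_zero j), Nat.add_sub_cancel, Nat.succ_sub_succ]
        rw [h2]
        simp only [Nat.sub_zero]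
        ring
      rw [derivative_sub, hdL, hdR, sub_self]
    have hconst : L - R = C ((L - R).coeff 0) := eq_C_of_derivative_eq_zero hderiv
    have heval : eval 0 (L - R) = 0 := by
      rw [hL, hR, eval_sub, habel_eval, eval_finset_sum, Finset.sum_range_succ']
      simp [habel_eval, habel_zero, habel]
    have hc0 : (L - R).coeff 0 = 0 := by
      have := congrArg (eval (0 : ℤ[X])) hconst
      rw [heval, eval_C] at this
      exact this.symm
    have : L - R = 0 := by rw [hconst, hc0, map_zero]
    exact sub_eq_zero.mp this
  
/-- Abel's second identity: `h_n(x+y) = ∑_{i+j=n} C(n,i) h_i(x) h_j(y)`. -/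
theorem abel_second_identity {A : Type*} [CommRing A] (n : ℕ) (x y : A) :
    habel n (x + y) =
      ∑ i ∈ Finset.range (n + 1), (n.choose i : A) * habel i x * habel (n - i) y := by
  let g : Polynomial ℤ →+* A := (Polynomial.aeval y).toRingHom
  let ψ : Polynomial (Polynomial ℤ) →+* A := Polynomial.eval₂RingHom g x
  have hX : ψ Polynomial.X = x := by simp [ψ]
  have hY : ψ (Polynomial.C Polynomial.X) = y := by simp [ψ, g]
  have h := congrArg ψ (key n)
  simpa [habel_map, map_sum, map_mul, map_natCast, map_add, hX, hY] using h
end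

section
/- Let δ = (δ_1, ..., δ_n) be a sequence of non-negative integers with Σ δ_i = n − k. Then the number of planted forests on vertex set {1,...,n} with exactly k components whose rooted degree sequence equals δ is C(n−1, k−1) · (n−k)! / (δ_1! · δ_2! ⋯ δ_n!). -/
open Finset
open scoped Classical

/-- A planted forest on `{1,...,n}`, encoded by its parent-pointer function:
`f i = none` means `i` is a root, `f i = some p` means there is an edge from `p` to `i`
oriented away from the root.  Acyclicity is expressed by the existence of a height
function that strictly decreases when passing to the parent. -/
def IsPlantedForest {n : ℕ} (f : Fin n → Option (Fin n)) : Prop :=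
  ∃ ht : Fin n → ℕ, ∀ i p, f i = some p → ht p < ht i

/-- The rooted degree of a vertex `i`: the number of edges starting at `i`,
i.e. the number of children of `i`. -/
def rootedDeg {n : ℕ} (f : Fin n → Option (Fin n)) (i : Fin n) : ℕ :=
  (univ.filter fun j => f j = some i).card

/-- The number of roots, i.e. the number of connected components. -/
def numComponents {n : ℕ} (f : Fin n → Option (Fin n)) : ℕ :=
  (univ.filter fun i => f i = none).card

/-! A vertex `i` with `δ i = 0` is a leaf, and deleting it is a bijection from the forests counted
onto the forests on the remaining `n - 1` vertices that have one component fewer (if `i` was a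
root) or the same components and `δ j` lowered by one (if `i` was a child of `j`). Writing the
count as `C(n-1, k-1) · M(δ)`, the first alternative contributes `C(n-2, k-2) · M(δ)` and the
second `C(n-2, k-1) · ∑ⱼ M(δ - eⱼ) = C(n-2, k-1) · M(δ)`, and Pascal's rule closes the induction. -/

section Multinomial

open Function Nat

variable {α : Type*} [DecidableEq α] {s : Finset α} {f : α → ℕ} {a : α}

lemma sum_update_sub_one_add_one (ha : a ∈ s) (hfa : f a ≠ 0) :
    ∑ x ∈ s, update f a (f a - 1) x + 1 = ∑ x ∈ s, f x := by
  rw [sum_update_of_mem ha, ← add_sum_erase s f ha, sdiff_singleton_eq_erase]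
  omega

lemma Nat.sum_mul_multinomial_update_sub_one (ha : a ∈ s) (hfa : f a ≠ 0) :
    (∑ x ∈ s, f x) * multinomial s (update f a (f a - 1)) = f a * multinomial s f := by
  set g := update f a (f a - 1)
  have hprod : f a * ∏ x ∈ s, (g x)! = ∏ x ∈ s, (f x)! := by
    rw [show (fun x => (g x)!) = update (fun x => (f x)!) a (f a - 1)! from
        funext (apply_update (fun _ m => m !) f a (f a - 1)),
      prod_update_of_mem ha, ← mul_assoc, mul_factorial_pred hfa, sdiff_singleton_eq_erase,
      mul_prod_erase s (fun x => (f x)!) ha]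
  apply Nat.eq_of_mul_eq_mul_left (prod_pos fun x _ => factorial_pos (g x))
  calc (∏ x ∈ s, (g x)!) * ((∑ x ∈ s, f x) * multinomial s g)
      = (∑ x ∈ s, f x) * (∑ x ∈ s, g x)! := by rw [← multinomial_spec]; ring
    _ = (∑ x ∈ s, f x)! := by
      rw [← sum_update_sub_one_add_one ha hfa, ← factorial_succ]
    _ = (∏ x ∈ s, (g x)!) * (f a * multinomial s f) := by
      rw [← multinomial_spec, ← hprod]; ring

theorem Nat.sum_multinomial_update_sub_one (hf : ∑ x ∈ s, f x ≠ 0) :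
    ∑ a ∈ s with f a ≠ 0, multinomial s (update f a (f a - 1)) = multinomial s f := by
  apply Nat.eq_of_mul_eq_mul_left (Nat.pos_of_ne_zero hf)
  rw [mul_sum, sum_congr rfl fun a ha => Nat.sum_mul_multinomial_update_sub_one
    (mem_filter.1 ha).1 (mem_filter.1 ha).2, ← sum_mul, sum_filter_ne_zero]

end Multinomial

section SuccAbove

variable {n : ℕ} {δ : Fin (n + 1) → ℕ} {i : Fin (n + 1)}

lemma Fin.sum_comp_succAbove_of_eq_zero (hi : δ i = 0) : ∑ y, δ (i.succAbove y) = ∑ x, δ x := by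
  simp [Fin.sum_univ_succAbove δ i, hi]

lemma Nat.multinomial_comp_succAbove_of_eq_zero (hi : δ i = 0) :
    Nat.multinomial univ (δ ∘ i.succAbove) = Nat.multinomial univ δ := by
  simp [Nat.multinomial, Fin.sum_univ_succAbove δ i, Fin.prod_univ_succAbove _ i, hi]

end SuccAbove

section Forest

variable {n : ℕ}

lemma rootedDeg_eq_zero_iff {f : Fin n → Option (Fin n)} {j : Fin n} :
    rootedDeg f j = 0 ↔ ∀ x, f x ≠ some j := by
  simp [rootedDeg, filter_eq_empty_iff]

lemma IsPlantedForest.exists_root [Nonempty (Fin n)] {f : Fin n → Option (Fin n)}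
    (hf : IsPlantedForest f) : ∃ x, f x = none := by
  obtain ⟨ht, hht⟩ := hf
  obtain ⟨x, hx⟩ := Finite.exists_min ht
  refine ⟨x, Option.eq_none_iff_forall_ne_some.2 fun p hp => ?_⟩
  exact (hx p).not_gt (hht x p hp)

lemma IsPlantedForest.numComponents_pos [Nonempty (Fin n)] {f : Fin n → Option (Fin n)}
    (hf : IsPlantedForest f) : 0 < numComponents f := by
  obtain ⟨x, hx⟩ := hf.exists_root
  exact card_pos.2 ⟨x, by simpa using hx⟩

def insertVertex (i : Fin (n + 1)) (v : Option (Fin (n + 1))) (g : Fin n → Option (Fin n)) :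
    Fin (n + 1) → Option (Fin (n + 1)) :=
  Fin.insertNth i v fun y => (g y).map i.succAbove

def deleteVertex (i : Fin (n + 1)) (f : Fin (n + 1) → Option (Fin (n + 1))) :
    Fin n → Option (Fin n) :=
  fun y => (f (i.succAbove y)).bind (finSuccEquiv' i)

variable {i : Fin (n + 1)} {v : Option (Fin (n + 1))} {g : Fin n → Option (Fin n)}

@[simp]
lemma insertVertex_apply_self : insertVertex i v g i = v :=
  Fin.insertNth_apply_same _ _ _

@[simp]
lemma insertVertex_apply_succAbove (y : Fin n) :
    insertVertex i v g (i.succAbove y) = (g y).map i.succAbove :=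
  Fin.insertNth_apply_succAbove _ _ _ _

@[simp]
lemma deleteVertex_insertVertex : deleteVertex i (insertVertex i v g) = g := by
  funext y
  cases hy : g y <;> simp [deleteVertex, hy]

lemma insertVertex_injective : Function.Injective (insertVertex (n := n) i v) := fun g g' h => by
  simpa using congrArg (deleteVertex i) h

lemma insertVertex_deleteVertex {f : Fin (n + 1) → Option (Fin (n + 1))}
    (hf : ∀ x, f x ≠ some i) : insertVertex i (f i) (deleteVertex i f) = f := by
  funext x
  induction x using i.succAboveCases with
  | x => simp
  | p y =>
    rw [insertVertex_apply_succAbove, deleteVertex]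
    cases hfy : f (i.succAbove y) with
    | none => simp
    | some p =>
      obtain ⟨q, rfl⟩ := Fin.exists_succAbove_eq (ne_of_apply_ne some (hfy ▸ hf _))
      simp

lemma isPlantedForest_insertVertex_iff (hv : v ≠ some i) :
    IsPlantedForest (insertVertex i v g) ↔ IsPlantedForest g := by
  constructor
  · rintro ⟨ht, hht⟩
    exact ⟨ht ∘ i.succAbove, fun y q h => hht _ _ (by simp [h])⟩
  · rintro ⟨ht, hht⟩
    refine ⟨Fin.insertNth i (univ.sup ht + 1) ht, fun x p hxp => ?_⟩
    induction x using i.succAboveCases with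
    | x =>
      rw [insertVertex_apply_self] at hxp
      obtain ⟨q, rfl⟩ := Fin.exists_succAbove_eq (ne_of_apply_ne some (hxp ▸ hv))
      simpa [Nat.lt_succ_iff] using le_sup (mem_univ q)
    | p y =>
      obtain ⟨q, hq, rfl⟩ := Option.map_eq_some_iff.1 (by simpa using hxp)
      simpa using hht y q hq

lemma numComponents_insertVertex :
    numComponents (insertVertex i v g) = numComponents g + if v = none then 1 else 0 := by
  simp only [numComponents, card_filter, Fin.sum_univ_succAbove _ i, insertVertex_apply_self,
    insertVertex_apply_succAbove, Option.map_eq_none_iff]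
  ring

lemma rootedDeg_insertVertex_self (hv : v ≠ some i) : rootedDeg (insertVertex i v g) i = 0 := by
  refine rootedDeg_eq_zero_iff.2 fun x => ?_
  induction x using i.succAboveCases with
  | x => simpa
  | p y => cases g y <;> simp [Fin.succAbove_ne]

lemma rootedDeg_insertVertex_succAbove (y : Fin n) :
    rootedDeg (insertVertex i v g) (i.succAbove y)
      = rootedDeg g y + if v = some (i.succAbove y) then 1 else 0 := by
  simp only [rootedDeg, card_filter, Fin.sum_univ_succAbove _ i, insertVertex_apply_self,
    insertVertex_apply_succAbove, Option.map_eq_some_iff, Fin.succAbove_right_inj,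
    exists_eq_right]
  ring

end Forest

noncomputable def plantedForests (n k : ℕ) (δ : Fin n → ℕ) : Finset (Fin n → Option (Fin n)) :=
  univ.filter fun f => IsPlantedForest f ∧ numComponents f = k ∧ ∀ i, rootedDeg f i = δ i

section Recursion

open Function

variable {n k k' : ℕ} {i : Fin (n + 1)} {v : Option (Fin (n + 1))} {δ : Fin (n + 1) → ℕ}
  {δ' : Fin n → ℕ}

lemma plantedForests_succ_zero (δ : Fin (n + 1) → ℕ) : plantedForests (n + 1) 0 δ = ∅ :=
  filter_eq_empty_iff.2 fun _ _ ⟨hf, h0, _⟩ => hf.numComponents_pos.ne' h0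

lemma card_plantedForests_zero_zero (δ : Fin 0 → ℕ) : #(plantedForests 0 0 δ) = 1 := by
  rw [plantedForests, filter_true_of_mem fun f _ => ⟨⟨0, finZeroElim⟩, by simp [numComponents],
    finZeroElim⟩]
  simp

lemma apply_ne_some_of_mem_plantedForests {f : Fin (n + 1) → Option (Fin (n + 1))}
    (hf : f ∈ plantedForests (n + 1) k δ) {j : Fin (n + 1)} (hj : δ j = 0) (x : Fin (n + 1)) :
    f x ≠ some j :=
  rootedDeg_eq_zero_iff.1 (((mem_filter.1 hf).2.2.2 j).trans hj) x

lemma insertVertex_mem_plantedForests_iff (hv : v ≠ some i) (hi : δ i = 0)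
    (hk : k = k' + if v = none then 1 else 0)
    (hδ : ∀ y, δ (i.succAbove y) = δ' y + if v = some (i.succAbove y) then 1 else 0)
    {g : Fin n → Option (Fin n)} :
    insertVertex i v g ∈ plantedForests (n + 1) k δ ↔ g ∈ plantedForests n k' δ' := by
  simp only [plantedForests, mem_filter, mem_univ, true_and, isPlantedForest_insertVertex_iff hv,
    numComponents_insertVertex, hk, Nat.add_right_cancel_iff, Fin.forall_iff_succAbove i,
    rootedDeg_insertVertex_self hv, hi, rootedDeg_insertVertex_succAbove, hδ, true_and]

lemma filter_plantedForests_apply_eq (hv : v ≠ some i) (hi : δ i = 0)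
    (hk : k = k' + if v = none then 1 else 0)
    (hδ : ∀ y, δ (i.succAbove y) = δ' y + if v = some (i.succAbove y) then 1 else 0) :
    {f ∈ plantedForests (n + 1) k δ | f i = v}
      = (plantedForests n k' δ').map ⟨insertVertex i v, insertVertex_injective⟩ := by
  ext f
  simp only [mem_filter, mem_map, Function.Embedding.coeFn_mk]
  constructor
  · rintro ⟨hf, rfl⟩
    have hfi := insertVertex_deleteVertex (apply_ne_some_of_mem_plantedForests hf hi)
    refine ⟨deleteVertex i f, ?_, hfi⟩
    rwa [← insertVertex_mem_plantedForests_iff hv hi hk hδ, hfi]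
  · rintro ⟨g, hg, rfl⟩
    exact ⟨(insertVertex_mem_plantedForests_iff hv hi hk hδ).2 hg, insertVertex_apply_self⟩

theorem card_plantedForests_succ (i : Fin (n + 1)) (hi : δ i = 0) :
    #(plantedForests (n + 1) (k + 1) δ)
      = #(plantedForests n k (δ ∘ i.succAbove))
        + ∑ j ∈ univ with δ j ≠ 0,
            #(plantedForests n (k + 1) (update δ j (δ j - 1) ∘ i.succAbove)) := by
  rw [card_eq_sum_card_fiberwise (f := fun f => f i) (t := univ) fun _ _ => mem_univ _,
    Fintype.sum_option]
  congr 1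
  · rw [filter_plantedForests_apply_eq (k' := k) (δ' := δ ∘ i.succAbove) (by simp) hi (by simp)
      (by simp), card_map]
  · rw [← sum_filter_of_ne (p := fun j => δ j ≠ 0) fun j _ hj => ?_]
    · refine sum_congr rfl fun j hj => ?_
      have hji : j ≠ i := by rintro rfl; exact (mem_filter.1 hj).2 hi
      rw [filter_plantedForests_apply_eq (k' := k + 1) (by simpa using hji) hi (by simp)
        fun y => ?_, card_map]
      by_cases hy : i.succAbove y = j
      · subst hy
        simp only [comp_apply, update_self, if_true]
        have := (mem_filter.1 hj).2
        omega
      · simp [update_of_ne hy, Ne.symm hy]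
    · intro hj0
      obtain ⟨f, hf⟩ := card_ne_zero.1 hj
      exact apply_ne_some_of_mem_plantedForests (mem_filter.1 hf).1 hj0 i (mem_filter.1 hf).2

end Recursion

theorem card_plantedForests (n k : ℕ) (δ : Fin (n + 1) → ℕ) (h : ∑ x, δ x + k = n) :
    #(plantedForests (n + 1) (k + 1) δ) = n.choose k * Nat.multinomial univ δ := by
  induction n generalizing k with
  | zero =>
    obtain ⟨hδ, rfl⟩ : δ 0 = 0 ∧ k = 0 := by rw [Fin.sum_univ_one] at h; omega
    rw [card_plantedForests_succ 0 hδ, card_plantedForests_zero_zero,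
      filter_false_of_mem (by simp [hδ])]
    simp
  | succ m ih =>
    obtain ⟨i, hi⟩ : ∃ i, δ i = 0 := by
      have hlt : ∑ x, δ x < ∑ _x : Fin (m + 2), 1 := by
        rw [sum_const, card_univ, Fintype.card_fin, smul_eq_mul, mul_one]; omega
      simpa using exists_lt_of_sum_lt hlt
    have hsome : ∑ j ∈ univ with δ j ≠ 0,
        #(plantedForests (m + 1) (k + 1) (Function.update δ j (δ j - 1) ∘ i.succAbove))
          = m.choose k * Nat.multinomial univ δ := by
      rcases eq_or_ne (∑ x, δ x) 0 with h0 | h0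
      · rw [filter_false_of_mem (by simpa using sum_eq_zero_iff.1 h0), sum_empty,
          Nat.choose_eq_zero_of_lt (by omega), zero_mul]
      rw [← Nat.sum_multinomial_update_sub_one h0, mul_sum]
      refine sum_congr rfl fun j hj => ?_
      have hj0 := (mem_filter.1 hj).2
      have hji : Function.update δ j (δ j - 1) i = 0 :=
        (Function.update_of_ne (by rintro rfl; exact hj0 hi) _ _).trans hi
      have hsum := sum_update_sub_one_add_one (mem_univ j) hj0
      rw [ih _ _ (by rw [Function.comp_def, Fin.sum_comp_succAbove_of_eq_zero hji]; omega),
        Nat.multinomial_comp_succAbove_of_eq_zero hji]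
    rw [card_plantedForests_succ i hi, hsome]
    cases k with
    | zero => simp [plantedForests_succ_zero]
    | succ k =>
      rw [ih _ _ (by rw [Function.comp_def, Fin.sum_comp_succAbove_of_eq_zero hi]; omega),
        Nat.multinomial_comp_succAbove_of_eq_zero hi, ← add_mul, Nat.choose_succ_succ']

/-- The number of planted forests on `{1,...,n}` with exactly `k` components and rooted
degree sequence `δ` (with `∑ δᵢ = n - k`) is `C(n-1,k-1) · (n-k)! / (δ₁! ⋯ δₙ!)`. -/
theorem count_planted_forests_with_degree_sequence (n k : ℕ) (hk : 1 ≤ k) (hkn : k ≤ n)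
    (δ : Fin n → ℕ) (hδ : ∑ i, δ i = n - k) :
    ((univ : Finset (Fin n → Option (Fin n))).filter
        (fun f => IsPlantedForest f ∧ numComponents f = k ∧ ∀ i, rootedDeg f i = δ i)).card
      = (n - 1).choose (k - 1) * Nat.multinomial univ δ := by
  obtain ⟨m, rfl⟩ : ∃ m, n = m + 1 := ⟨n - 1, by omega⟩
  obtain ⟨j, rfl⟩ : ∃ j, k = j + 1 := ⟨k - 1, by omega⟩
  rw [Nat.add_sub_cancel, Nat.add_sub_cancel]
  exact card_plantedForests m j δ (by omega)
end

section
/- For planted forests σ on vertex set {1,...,n} with exactly k components, the sum over all such σ of the degree sequence monomials x_1^{deg 1} ⋯ x_n^{deg n} equals C(n−1, k−1) · (x_1 + ⋯ + x_n)^{n−k}, where deg i is the rooted degree of vertex i in σ. -/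
open Finset
open scoped Classical

noncomputable section

variable {n : ℕ}

/-- forests on vertex set `V` with root set `R`. -/
def FSet (V R : Finset (Fin n)) : Finset (Fin n → Option (Fin n)) :=
  univ.filter fun f =>
    (∀ i, i ∉ V → f i = none) ∧ (∀ i ∈ V, (f i = none ↔ i ∈ R)) ∧
    (∀ i p, f i = some p → p ∈ V) ∧ IsPlantedForest f

variable {A : Type*} [CommRing A]

def Fw (x : Fin n → A) (V R : Finset (Fin n)) : A :=
  ∑ f ∈ FSet V R, ∏ i ∈ V, x i ^ rootedDeg f i

lemma FSet_self (V : Finset (Fin n)) : FSet V V = {fun _ => none} := by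
  ext f
  simp only [FSet, mem_filter, mem_univ, true_and, mem_singleton]
  constructor
  · rintro ⟨h1, h2, -, -⟩
    funext i
    by_cases hi : i ∈ V
    · exact (h2 i hi).2 hi
    · exact h1 i hi
  · rintro rfl
    refine ⟨fun _ _ => rfl, fun i hi => ⟨fun _ => hi, fun _ => rfl⟩, ?_, ⟨fun _ => 0, ?_⟩⟩ <;>
      · intro i p h; simp at h

lemma Fw_self (x : Fin n → A) (V : Finset (Fin n)) : Fw x V V = 1 := by
  simp [Fw, FSet_self, rootedDeg]

lemma FSet_empty_roots (V : Finset (Fin n)) (hV : V.Nonempty) : FSet V (∅ : Finset (Fin n)) = ∅ := by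
  rw [eq_empty_iff_forall_notMem]
  intro f hf
  simp only [FSet, mem_filter, mem_univ, true_and] at hf
  obtain ⟨h1, h2, h3, ht, hht⟩ := hf
  obtain ⟨i, hiV, hmin⟩ := Finset.exists_min_image V ht hV
  have hnone : f i ≠ none := fun h => by simpa using (h2 i hiV).1 h
  obtain ⟨p, hp⟩ := Option.ne_none_iff_exists'.1 hnone
  exact absurd (hht i p hp) (not_lt.2 (hmin p (h3 i p hp)))

lemma Fw_empty_roots (x : Fin n → A) (V : Finset (Fin n)) (hV : V.Nonempty) :
    Fw x V (∅ : Finset (Fin n)) = 0 := by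
  simp [Fw, FSet_empty_roots V hV]

end
noncomputable section

variable {n : ℕ} {A : Type*} [CommRing A]

lemma card_powersetCard_filter_mem (T : Finset (Fin n)) (k : ℕ) (hk : 1 ≤ k)
    (i : Fin n) (hi : i ∈ T) :
    ((T.powersetCard k).filter (fun S => i ∈ S)).card = (T.card - 1).choose (k - 1) := by
  have h : ((T.powersetCard k).filter (fun S => i ∈ S)).card
      = ((T.erase i).powersetCard (k - 1)).card := by
    refine Finset.card_bij' (fun S _ => S.erase i) (fun D _ => insert i D) ?_ ?_ ?_ ?_
    · intro S hS
      simp only [mem_filter, mem_powersetCard] at hS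
      obtain ⟨⟨hST, hcard⟩, hiS⟩ := hS
      rw [mem_powersetCard]
      refine ⟨fun j hj => ?_, ?_⟩
      · rw [mem_erase] at hj ⊢
        exact ⟨hj.1, hST hj.2⟩
      · rw [card_erase_of_mem hiS, hcard]
    · intro D hD
      rw [mem_powersetCard] at hD
      obtain ⟨hDT, hcard⟩ := hD
      have hiD : i ∉ D := fun h => (mem_erase.1 (hDT h)).1 rfl
      simp only [mem_filter, mem_powersetCard]
      refine ⟨⟨?_, ?_⟩, mem_insert_self _ _⟩
      · intro j hj
        rcases mem_insert.1 hj with rfl | hj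
        · exact hi
        · exact (mem_erase.1 (hDT hj)).2
      · rw [card_insert_of_notMem hiD, hcard]
        omega
    · intro S hS
      simp only [mem_filter] at hS
      exact insert_erase hS.2
    · intro D hD
      rw [mem_powersetCard] at hD
      have hiD : i ∉ D := fun h => (mem_erase.1 (hD.1 h)).1 rfl
      exact erase_insert hiD
  rw [h, card_powersetCard, card_erase_of_mem hi]

lemma sum_powersetCard_sum (T : Finset (Fin n)) (k : ℕ) (hk : 1 ≤ k) (x : Fin n → A) :
    ∑ S ∈ T.powersetCard k, ∑ i ∈ S, x i
      = ((T.card - 1).choose (k - 1) : A) * ∑ i ∈ T, x i := by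
  have h1 : ∀ S ∈ T.powersetCard k, ∑ i ∈ S, x i = ∑ i ∈ T, if i ∈ S then x i else 0 := by
    intro S hS
    rw [← Finset.sum_filter]
    congr 1
    have hST : S ⊆ T := (Finset.mem_powersetCard.1 hS).1
    ext j
    simp only [mem_filter]
    exact ⟨fun h => ⟨hST h, h⟩, fun h => h.2⟩
  rw [Finset.sum_congr rfl h1, Finset.sum_comm, Finset.mul_sum]
  apply Finset.sum_congr rfl
  intro i hi
  rw [← Finset.sum_filter, Finset.sum_const, card_powersetCard_filter_mem T k hk i hi,
    nsmul_eq_mul]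

/-- assignments from `D` to `R`, encoded as functions that are the identity off `D`. -/
def ADf (D R : Finset (Fin n)) : Finset (Fin n → Fin n) :=
  univ.filter fun a => ∀ i, if i ∈ D then a i ∈ R else a i = i

lemma sum_ADf (x : Fin n → A) (D R : Finset (Fin n)) :
    ∑ a ∈ ADf D R, ∏ j ∈ D, x (a j) = (∑ r ∈ R, x r) ^ D.card := by
  have h1 : ADf D R = Fintype.piFinset (fun i => if i ∈ D then R else {i}) := by
    ext a
    simp only [ADf, mem_filter, mem_univ, true_and, Fintype.mem_piFinset]
    refine forall_congr' fun i => ?_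
    by_cases hi : i ∈ D <;> simp [hi]
  have hDu : univ.filter (fun i : Fin n => i ∈ D) = D := by ext j; simp
  have h2 : ∀ a : Fin n → Fin n, ∏ j ∈ D, x (a j)
      = ∏ i, (if i ∈ D then x (a i) else 1) := by
    intro a
    rw [← Finset.prod_filter, hDu]
  calc ∑ a ∈ ADf D R, ∏ j ∈ D, x (a j)
      = ∑ a ∈ Fintype.piFinset (fun i => if i ∈ D then R else {i}),
          ∏ i, (if i ∈ D then x (a i) else 1) := by
        rw [h1]; exact Finset.sum_congr rfl fun a _ => h2 a
    _ = ∏ i, ∑ b ∈ (if i ∈ D then R else {i}), (if i ∈ D then x b else 1) :=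
        (Finset.prod_univ_sum (fun i => if i ∈ D then R else {i})
          (fun i b => if i ∈ D then x b else 1)).symm
    _ = ∏ i, (if i ∈ D then ∑ r ∈ R, x r else 1) := by
        apply Finset.prod_congr rfl
        intro i _
        by_cases hi : i ∈ D <;> simp [hi]
    _ = (∑ r ∈ R, x r) ^ D.card := by
        rw [← Finset.prod_filter, hDu, Finset.prod_const]

end
noncomputable section
variable {n : ℕ} {A : Type*} [CommRing A]

/-- strip the edges from roots in `R`. -/
def stripR (R : Finset (Fin n)) (f : Fin n → Option (Fin n)) : Fin n → Option (Fin n) :=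
  fun i => (f i).bind fun p => if p ∈ R then none else some p

/-- the set of depth-one vertices: non-roots whose parent is a root. -/
def DOf (V R : Finset (Fin n)) (f : Fin n → Option (Fin n)) : Finset (Fin n) :=
  (V \ R).filter fun j => ∃ r ∈ R, f j = some r

lemma Fw_recursion (x : Fin n → A) (V R : Finset (Fin n)) (hRV : R ⊆ V) :
    Fw x V R = ∑ D ∈ (V \ R).powerset, (∑ r ∈ R, x r) ^ D.card * Fw x (V \ R) D := by
  classical
  set W := V \ R with hW
  have hWV : W ⊆ V := sdiff_subset
  have hWR : ∀ i, i ∈ W → i ∉ R := fun i hi => (mem_sdiff.1 hi).2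
  -- fiberwise decomposition over D = DOf V R f
  have hmaps : ∀ f ∈ FSet V R, DOf V R f ∈ W.powerset :=
    fun f _ => mem_powerset.2 (filter_subset _ _)
  have step1 : Fw x V R = ∑ D ∈ W.powerset,
      ∑ f ∈ (FSet V R).filter (fun f => DOf V R f = D), ∏ i ∈ V, x i ^ rootedDeg f i :=
    (Finset.sum_fiberwise_of_maps_to hmaps _).symm
  rw [step1]
  apply Finset.sum_congr rfl
  intro D hD
  have hDW : D ⊆ W := mem_powerset.1 hD
  have key : ∑ f ∈ (FSet V R).filter (fun f => DOf V R f = D), ∏ i ∈ V, x i ^ rootedDeg f i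
      = ∑ q ∈ (FSet W D) ×ˢ (ADf D R),
          (∏ j ∈ D, x (q.2 j)) * ∏ i ∈ W, x i ^ rootedDeg q.1 i := by
    apply Finset.sum_nbij'
      (i := fun f => (stripR R f, fun i => if i ∈ D then (f i).getD i else i))
      (j := fun q => fun i => if i ∈ D then some (q.2 i) else q.1 i)
    -- forward membership
    · intro f hf
      simp only [mem_filter] at hf
      obtain ⟨hf, hDf⟩ := hf
      simp only [FSet, mem_filter, mem_univ, true_and] at hf
      obtain ⟨hC1, hC2, hC3, ht, hht⟩ := hf
      have hDmem : ∀ j, j ∈ D ↔ (j ∈ W ∧ ∃ r ∈ R, f j = some r) := by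
        intro j; rw [← hDf]; simp [DOf, hW]
      rw [Finset.mem_product]
      constructor
      · simp only [FSet, mem_filter, mem_univ, true_and]
        refine ⟨?_, ?_, ?_, ht, ?_⟩
        · intro i hiW
          by_cases hiV : i ∈ V
          · have hiR : i ∈ R := by
              by_contra hiR
              exact hiW (mem_sdiff.2 ⟨hiV, hiR⟩)
            simp [stripR, (hC2 i hiV).2 hiR]
          · simp [stripR, hC1 i hiV]
        · intro i hiW
          have hiV : i ∈ V := hWV hiW
          have hiR : i ∉ R := hWR i hiW
          have hne : f i ≠ none := fun h => hiR ((hC2 i hiV).1 h)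
          obtain ⟨p, hp⟩ := Option.ne_none_iff_exists'.1 hne
          constructor
          · intro hs
            have hpR : p ∈ R := by
              by_contra hpR
              simp [stripR, hp, hpR] at hs
            exact (hDmem i).2 ⟨hiW, p, hpR, hp⟩
          · intro hiD
            obtain ⟨-, r, hrR, hfr⟩ := (hDmem i).1 hiD
            simp [stripR, hfr, hrR]
        · intro i p hs
          have : f i = some p ∧ p ∉ R := by
            by_cases h : f i = none
            · simp [stripR, h] at hs
            · obtain ⟨q, hq⟩ := Option.ne_none_iff_exists'.1 h
              by_cases hqR : q ∈ R <;> simp [stripR, hq, hqR] at hs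
              · exact ⟨by rw [hq, hs], hs ▸ hqR⟩
          exact mem_sdiff.2 ⟨hC3 i p this.1, this.2⟩
        · intro i p hs
          apply hht i p
          by_cases h : f i = none
          · simp [stripR, h] at hs
          · obtain ⟨q, hq⟩ := Option.ne_none_iff_exists'.1 h
            by_cases hqR : q ∈ R <;> simp [stripR, hq, hqR] at hs
            · rw [hq, hs]
      · simp only [ADf, mem_filter, mem_univ, true_and]
        intro i
        by_cases hiD : i ∈ D
        · simp only [hiD, if_true]
          obtain ⟨-, r, hrR, hfr⟩ := (hDmem i).1 hiD
          simpa [hfr] using hrR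
        · simp [hiD]
    -- backward membership
    · intro q hq
      rw [Finset.mem_product] at hq
      obtain ⟨hq1, hq2⟩ := hq
      simp only [FSet, mem_filter, mem_univ, true_and] at hq1
      obtain ⟨hC1, hC2, hC3, ht', hht'⟩ := hq1
      simp only [ADf, mem_filter, mem_univ, true_and] at hq2
      have haR : ∀ i ∈ D, q.2 i ∈ R := by
        intro i hi; have := hq2 i; rwa [if_pos hi] at this
      simp only [mem_filter]
      constructor
      · simp only [FSet, mem_filter, mem_univ, true_and]
        refine ⟨?_, ?_, ?_, ?_⟩
        · intro i hiV
          have hiD : i ∉ D := fun h => hiV (hWV (hDW h))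
          have hiW : i ∉ W := fun h => hiV (hWV h)
          simp [hiD, hC1 i hiW]
        · intro i hiV
          by_cases hiR : i ∈ R
          · have hiD : i ∉ D := fun h => hWR i (hDW h) hiR
            have hiW : i ∉ W := fun h => hWR i h hiR
            simp [hiD, hC1 i hiW, hiR]
          · have hiW : i ∈ W := mem_sdiff.2 ⟨hiV, hiR⟩
            by_cases hiD : i ∈ D
            · simp [hiD, hiR]
            · simp only [hiD, if_neg, hiR, iff_false]
              intro h
              exact hiD ((hC2 i hiW).1 h)
        · intro i p hs
          by_cases hiD : i ∈ D
          · simp only [if_pos hiD] at hs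
            have hqp : q.2 i = p := by injection hs
            exact hqp ▸ hRV (haR i hiD)
          · simp only [if_neg hiD] at hs
            exact hWV (hC3 i p hs)
        · refine ⟨fun i => if i ∈ R then 0 else ht' i + 1, ?_⟩
          intro i p hs
          by_cases hiD : i ∈ D
          · simp only [if_pos hiD] at hs
            have hpR : p ∈ R := by
              have hqp : q.2 i = p := by injection hs
              exact hqp ▸ haR i hiD
            have hiR : i ∉ R := hWR i (hDW hiD)
            simp [hpR, hiR]
          · simp only [if_neg hiD] at hs
            have hiW : i ∈ W := by
              by_contra h
              rw [hC1 i h] at hs; cases hs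
            have hpW : p ∈ W := hC3 i p hs
            have hiR : i ∉ R := hWR i hiW
            have hpR : p ∉ R := hWR p hpW
            simp only [hiR, hpR, if_neg, not_false_iff]
            exact Nat.succ_lt_succ (hht' i p hs)
      · -- DOf of merged = D
        ext j
        simp only [DOf, mem_filter, ← hW]
        constructor
        · rintro ⟨hjW, r, hrR, hjr⟩
          by_cases hjD : j ∈ D
          · exact hjD
          · simp only [if_neg hjD] at hjr
            exact absurd hrR (hWR r (hC3 j r hjr))
        · intro hjD
          exact ⟨hDW hjD, q.2 j, haR j hjD, by simp only [if_pos hjD]⟩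
    -- left inverse
    · intro f hf
      simp only [mem_filter] at hf
      obtain ⟨hf, hDf⟩ := hf
      simp only [FSet, mem_filter, mem_univ, true_and] at hf
      obtain ⟨hC1, hC2, hC3, -⟩ := hf
      have hDmem : ∀ j, j ∈ D ↔ (j ∈ W ∧ ∃ r ∈ R, f j = some r) := by
        intro j; rw [← hDf]; simp [DOf, hW]
      funext i
      by_cases hiD : i ∈ D
      · obtain ⟨-, r, hrR, hfr⟩ := (hDmem i).1 hiD
        simp [hiD, hfr]
      · simp only [hiD, if_neg, not_false_iff]
        rcases h : f i with _ | p
        · simp [stripR, h]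
        · have hpR : p ∉ R := by
            intro hpR
            apply hiD
            rw [hDmem]
            have hiV : i ∈ V := by
              by_contra hiV
              rw [hC1 i hiV] at h; cases h
            have hiR : i ∉ R := by
              intro hiR
              rw [(hC2 i hiV).2 hiR] at h; cases h
            exact ⟨mem_sdiff.2 ⟨hiV, hiR⟩, p, hpR, h⟩
          simp [stripR, h, hpR]
    -- right inverse
    · intro q hq
      rw [Finset.mem_product] at hq
      obtain ⟨hq1, hq2⟩ := hq
      simp only [FSet, mem_filter, mem_univ, true_and] at hq1
      obtain ⟨hC1, hC2, hC3, -⟩ := hq1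
      simp only [ADf, mem_filter, mem_univ, true_and] at hq2
      have haR : ∀ i ∈ D, q.2 i ∈ R := by
        intro i hi; have := hq2 i; rwa [if_pos hi] at this
      have haid : ∀ i, i ∉ D → q.2 i = i := by
        intro i hi; have := hq2 i; rwa [if_neg hi] at this
      rw [Prod.mk.injEq]
      refine ⟨funext fun i => ?_, funext fun i => ?_⟩
      · -- first component
        show stripR R (fun i => if i ∈ D then some (q.2 i) else q.1 i) i = q.1 i
        by_cases hiD : i ∈ D
        · have hf' : q.1 i = none := (hC2 i (hDW hiD)).2 hiD
          simp [stripR, if_pos hiD, haR i hiD, hf']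
        · rcases h : q.1 i with _ | p
          · simp [stripR, if_neg hiD, h]
          · have hpW : p ∈ W := hC3 i p h
            have hpR : p ∉ R := hWR p hpW
            simp [stripR, if_neg hiD, h, hpR]
      · show (if i ∈ D then ((fun i => if i ∈ D then some (q.2 i) else q.1 i) i).getD i else i) = q.2 i
        by_cases hiD : i ∈ D
        · simp [if_pos hiD]
        · simp [if_neg hiD, haid i hiD]
    -- weights
    · intro f hf
      simp only [mem_filter] at hf
      obtain ⟨hf, hDf⟩ := hf
      simp only [FSet, mem_filter, mem_univ, true_and] at hf
      obtain ⟨hC1, hC2, hC3, -⟩ := hf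
      have hDmem : ∀ j, j ∈ D ↔ (j ∈ W ∧ ∃ r ∈ R, f j = some r) := by
        intro j; rw [← hDf]; simp [DOf, hW]
      have hsplit : (∏ i ∈ W, x i ^ rootedDeg f i) * (∏ i ∈ R, x i ^ rootedDeg f i)
          = ∏ i ∈ V, x i ^ rootedDeg f i := Finset.prod_sdiff hRV
      rw [← hsplit, mul_comm]
      congr 1
      · -- root part
        have hmap : ∀ j ∈ D, (f j).getD j ∈ R := by
          intro j hj
          obtain ⟨-, r, hrR, hfr⟩ := (hDmem j).1 hj
          simpa [hfr] using hrR
        have hfilter : ∀ i ∈ R, univ.filter (fun j => f j = some i)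
            = D.filter (fun j => (f j).getD j = i) := by
          intro i hiR
          ext j
          simp only [mem_filter, mem_univ, true_and]
          constructor
          · intro h
            have hjV : j ∈ V := by
              by_contra hjV
              rw [hC1 j hjV] at h; cases h
            have hjR : j ∉ R := by
              intro hjR
              rw [(hC2 j hjV).2 hjR] at h; cases h
            exact ⟨(hDmem j).2 ⟨mem_sdiff.2 ⟨hjV, hjR⟩, i, hiR, h⟩, by simp [h]⟩
          · rintro ⟨hjD, hg⟩
            obtain ⟨-, r, hrR, hfr⟩ := (hDmem j).1 hjD
            rw [hfr]
            simp only [hfr, Option.getD_some] at hg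
            rw [hg]
        calc ∏ i ∈ R, x i ^ rootedDeg f i
            = ∏ i ∈ R, ∏ j ∈ D.filter (fun j => (f j).getD j = i), x ((f j).getD j) := by
              apply Finset.prod_congr rfl
              intro i hiR
              have heq : ∏ j ∈ D.filter (fun j => (f j).getD j = i), x ((f j).getD j)
                  = ∏ _j ∈ D.filter (fun j => (f j).getD j = i), x i :=
                Finset.prod_congr rfl (fun j hj => by rw [(Finset.mem_filter.1 hj).2])
              rw [heq, Finset.prod_const, rootedDeg, hfilter i hiR]
          _ = ∏ j ∈ D, x ((f j).getD j) := Finset.prod_fiberwise_of_maps_to hmap _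
          _ = ∏ j ∈ D, x (if j ∈ D then (f j).getD j else j) := by
              apply Finset.prod_congr rfl
              intro j hj
              rw [if_pos hj]
      · apply Finset.prod_congr rfl
        intro i hiW
        have hiR : i ∉ R := hWR i hiW
        have hdeg : rootedDeg f i = rootedDeg (stripR R f) i := by
          unfold rootedDeg
          congr 1
          apply Finset.filter_congr
          intro j _
          constructor
          · intro h
            simp [stripR, h, hiR]
          · intro h
            rcases hj : f j with _ | p
            · simp [stripR, hj] at h
            · by_cases hpR : p ∈ R
              · simp [stripR, hj, hpR] at h
              · simp [stripR, hj, hpR] at h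
                rw [h]
        rw [hdeg]
  rw [key, Finset.sum_product, Fw, Finset.mul_sum]
  apply Finset.sum_congr rfl
  intro f' _
  dsimp only
  rw [← Finset.sum_mul, sum_ADf]
end
noncomputable section
variable {n : ℕ} {A : Type*} [CommRing A]

lemma Fw_eq (x : Fin n → A) :
    ∀ m (V R : Finset (Fin n)), (V \ R).card = m → R ⊆ V → R.Nonempty → R ≠ V →
      Fw x V R = (∑ r ∈ R, x r) * (∑ i ∈ V, x i) ^ (V.card - R.card - 1) := by
  intro m
  induction m using Nat.strong_induction_on with
  | _ m IH =>
    intro V R hm hRV hRne hRneV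
    set W := V \ R with hW
    have hWne : W.Nonempty := by
      rw [hW, Finset.sdiff_nonempty]
      intro h
      exact hRneV (Finset.Subset.antisymm hRV h)
    have hcardW : W.card = m := hm
    have hm1 : 1 ≤ m := by rw [← hcardW]; exact Finset.card_pos.2 hWne
    set c := ∑ r ∈ R, x r with hc
    set S := ∑ i ∈ W, x i with hS
    have hSV : ∑ i ∈ V, x i = S + c := by rw [hS, hc, hW, Finset.sum_sdiff hRV]
    have hexp : V.card - R.card - 1 = m - 1 := by
      rw [← hcardW, hW, Finset.card_sdiff_of_subset hRV]
    rw [Fw_recursion x V R hRV, ← hW, ← hc, Finset.sum_powerset, hcardW]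
    have inner : ∀ d ∈ Finset.range (m + 1),
        (∑ D ∈ W.powersetCard d, c ^ D.card * Fw x W D)
        = if d = 0 then 0 else ((m - 1).choose (d - 1) : A) * c ^ d * S ^ (m - d) := by
      intro d hd
      have hdm : d ≤ m := Nat.lt_succ_iff.1 (Finset.mem_range.1 hd)
      rcases Nat.eq_zero_or_pos d with rfl | hd1
      · rw [if_pos rfl, Finset.powersetCard_zero, Finset.sum_singleton,
          Fw_empty_roots x W hWne, mul_zero]
      · rw [if_neg (by omega)]
        rcases eq_or_lt_of_le hdm with rfl | hdm'
        · have hpc : W.powersetCard d = {W} := by rw [← hcardW]; exact Finset.powersetCard_self W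
          rw [hpc, Finset.sum_singleton, hcardW, Fw_self, Nat.sub_self]
          simp [Nat.choose_self]
        · have hcongr : ∀ D ∈ W.powersetCard d,
              c ^ D.card * Fw x W D = c ^ d * (S ^ (m - d - 1) * ∑ i ∈ D, x i) := by
            intro D hDm
            obtain ⟨hDW, hDcard⟩ := Finset.mem_powersetCard.1 hDm
            have hDne : D.Nonempty := Finset.card_pos.1 (by omega)
            have hDneW : D ≠ W := by
              intro h; rw [h, hcardW] at hDcard; omega
            have hWD : (W \ D).card < m := by
              rw [Finset.card_sdiff_of_subset hDW]; omega
            rw [hDcard, IH ((W \ D).card) hWD W D rfl hDW hDne hDneW]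
            have he : W.card - D.card - 1 = m - d - 1 := by rw [hcardW, hDcard]
            rw [he, ← hS]
            ring
          rw [Finset.sum_congr rfl hcongr, ← Finset.mul_sum, ← Finset.mul_sum,
            sum_powersetCard_sum W d hd1 x, hcardW, ← hS]
          have hpow : S ^ (m - d - 1) * S = S ^ (m - d) := by
            rw [← pow_succ]
            congr 1
            omega
          rw [← hpow]
          ring
    rw [Finset.sum_congr rfl inner, hSV, hexp]
    rw [Finset.sum_range_succ']
    simp only [Nat.succ_ne_zero, if_false, if_pos rfl, if_true, ite_true, add_zero, Nat.add_sub_cancel]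
    have hb : (S + c) ^ (m - 1) = ∑ k ∈ Finset.range m, S ^ k * c ^ (m - 1 - k) * ((m-1).choose k : A) := by
      have hmm : m - 1 + 1 = m := by omega
      rw [add_pow, hmm]
    rw [hb, Finset.mul_sum]
    conv_rhs => rw [← Finset.sum_range_reflect]
    apply Finset.sum_congr rfl
    intro j hj
    have hjm : j < m := Finset.mem_range.1 hj
    have h1 : m - 1 - (m - 1 - j) = j := by omega
    have h2 : (m - 1).choose (m - 1 - j) = (m - 1).choose j := by
      conv_lhs => rw [show m - 1 - j = (m-1) - j from rfl]
      rw [Nat.choose_symm (by omega : j ≤ m - 1)]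
    have h3 : m - (j + 1) = m - 1 - j := by omega
    rw [h1, h2, h3, pow_succ]
    ring
end

/-- The forest identity: summing the degree sequence monomials `x₁^{deg 1} ⋯ xₙ^{deg n}`
over all planted forests on `{1,...,n}` with exactly `k` components gives
`C(n-1,k-1) · (x₁ + ⋯ + xₙ)^{n-k}`. -/
theorem planted_forest_degree_monomial_sum (n k : ℕ) (hk : 1 ≤ k) (hkn : k ≤ n)
    {A : Type*} [CommRing A] (x : Fin n → A) :
    ∑ f ∈ (univ : Finset (Fin n → Option (Fin n))).filter
        (fun f => IsPlantedForest f ∧ numComponents f = k),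
      ∏ i, x i ^ rootedDeg f i
    = ((n - 1).choose (k - 1) : A) * (∑ i, x i) ^ (n - k) := by
  classical
  have hcardu : (univ : Finset (Fin n)).card = n := by simp
  set s := (univ : Finset (Fin n → Option (Fin n))).filter
      (fun f => IsPlantedForest f ∧ numComponents f = k) with hs
  have hmaps : ∀ f ∈ s, (univ.filter fun i => f i = none) ∈
      (univ : Finset (Fin n)).powersetCard k := by
    intro f hf
    simp only [hs, mem_filter, mem_univ, true_and] at hf
    rw [Finset.mem_powersetCard]
    exact ⟨Finset.filter_subset _ _, hf.2⟩
  have step1 : ∑ f ∈ s, ∏ i, x i ^ rootedDeg f i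
      = ∑ R ∈ (univ : Finset (Fin n)).powersetCard k,
          ∑ f ∈ s.filter (fun f => (univ.filter fun i => f i = none) = R),
            ∏ i, x i ^ rootedDeg f i :=
    (Finset.sum_fiberwise_of_maps_to hmaps _).symm
  have step2 : ∀ R ∈ (univ : Finset (Fin n)).powersetCard k,
      s.filter (fun f => (univ.filter fun i => f i = none) = R) = FSet univ R := by
    intro R hR
    have hRcard : R.card = k := (Finset.mem_powersetCard.1 hR).2
    ext f
    constructor
    · intro hf
      rw [mem_filter] at hf
      obtain ⟨hfs, hroot⟩ := hf
      rw [hs, mem_filter] at hfs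
      obtain ⟨-, hpf, -⟩ := hfs
      rw [FSet, mem_filter]
      refine ⟨mem_univ f, fun i hi => absurd (mem_univ i) hi, fun i _ => ?_,
        fun i p _ => mem_univ p, hpf⟩
      rw [← hroot]
      simp
    · intro hf
      rw [FSet, mem_filter] at hf
      obtain ⟨-, -, h2, -, hpf⟩ := hf
      have hroot : (univ.filter fun i => f i = none) = R := by
        ext i
        simp only [mem_filter, mem_univ, true_and]
        exact h2 i (mem_univ i)
      rw [mem_filter, hs, mem_filter]
      exact ⟨⟨mem_univ f, hpf, by rw [numComponents, hroot, hRcard]⟩, hroot⟩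
  rw [step1, Finset.sum_congr rfl (fun R hR => by rw [step2 R hR])]
  rcases eq_or_lt_of_le hkn with hEq | hkn'
  · have hp : (univ : Finset (Fin n)).powersetCard k = {univ} := by
      have h0 := Finset.powersetCard_self (univ : Finset (Fin n))
      rw [hcardu] at h0
      rw [hEq]
      exact h0
    rw [hp, Finset.sum_singleton]
    have h1 : ∑ f ∈ FSet (univ : Finset (Fin n)) univ, ∏ i, x i ^ rootedDeg f i
        = Fw x univ univ := rfl
    rw [h1, Fw_self, hEq, Nat.sub_self, Nat.choose_self, pow_zero, Nat.cast_one]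
    norm_num
  · have hcong : ∀ R ∈ (univ : Finset (Fin n)).powersetCard k,
        (∑ f ∈ FSet (univ : Finset (Fin n)) R, ∏ i, x i ^ rootedDeg f i)
        = (∑ r ∈ R, x r) * (∑ i, x i) ^ (n - k - 1) := by
      intro R hR
      obtain ⟨-, hRcard⟩ := Finset.mem_powersetCard.1 hR
      have hRne : R.Nonempty := Finset.card_pos.1 (by omega)
      have hRnu : R ≠ univ := by
        intro h; rw [h, hcardu] at hRcard; omega
      have := Fw_eq x ((univ \ R).card) univ R rfl (Finset.subset_univ R) hRne hRnu
      rw [Fw] at this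
      rw [this, hcardu, hRcard]
    rw [Finset.sum_congr rfl hcong, ← Finset.sum_mul, sum_powersetCard_sum _ k hk x, hcardu]
    have hpow : (∑ i, x i) ^ (n - k - 1) * (∑ i, x i) = (∑ i, x i) ^ (n - k) := by
      rw [← pow_succ]
      congr 1
      omega
    rw [← hpow]
    ring
end

section
/- The sum, over all partitions σ of {1,...,n} into exactly k blocks, of the product over blocks τ of σ of (s_τ)^{|τ|−1}, equals C(n−1, k−1) · (x_1 + ⋯ + x_n)^{n−k}, where s_τ = Σ_{i∈τ} x_i. -/
open Finset
open scoped Classical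

/-- `σ` is a partition of `{1,...,n}` into exactly `k` (non-empty, pairwise disjoint)
blocks whose union is all of `{1,...,n}`. -/
def IsPartitionInto {n : ℕ} (σ : Finset (Finset (Fin n))) (k : ℕ) : Prop :=
  (∀ τ ∈ σ, τ.Nonempty) ∧
  (∀ τ₁ ∈ σ, ∀ τ₂ ∈ σ, τ₁ ≠ τ₂ → Disjoint τ₁ τ₂) ∧
  σ.biUnion id = univ ∧ σ.card = k

/-!
Weighting every partition `σ` additionally by `t ^ #σ`, the sum over all partitions of `S` becomes
`t (t + s_S) ^ (#S - 1)`, and the theorem is its coefficient of `t ^ k`. Removing the block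
`insert e B` that contains a fixed element `e` turns this generating function identity, by
induction, into Hurwitz's generalisation of Abel's identity
  `∑_{T ⊆ M} x (x + w_{M \ T}) ^ (#(M \ T) - 1) (y + w_T) ^ #T = (x + y + w_M) ^ #M`
(the summand for `T = M` being `(y + w_M) ^ #M`).
Hurwitz's identity is proved by differentiating in `y`: by induction both sides have derivative
`#M (x + y + w_M) ^ (#M - 1)`, and at `y = -(x + w_M)` the left side is an alternating sum over
subsets, an `#M`-th finite difference of a polynomial of degree `#M - 1`, hence `0`. As this
needs a torsion-free coefficient ring, it is done for indeterminates over `ℤ` and specialised.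
-/

section FiniteDifference
variable {ι R : Type*} [DecidableEq ι] [CommRing R]

lemma add_pow_sub_pow (a b : R) (d : ℕ) :
    (a + b) ^ d - a ^ d = ∑ j ∈ range d, a ^ j * b ^ (d - j) * d.choose j := by
  rw [add_pow, sum_range_succ, Nat.sub_self, pow_zero, Nat.choose_self, Nat.cast_one, mul_one,
    mul_one, add_sub_cancel_right]

theorem sum_powerset_neg_one_pow_card_mul_pow_eq_zero (w : ι → R) (M : Finset ι) (c : R) {d : ℕ}
    (hd : d < #M) : ∑ T ∈ M.powerset, (-1) ^ #T * (c + ∑ i ∈ M \ T, w i) ^ d = 0 := by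
  induction M using Finset.induction_on generalizing d with
  | empty => simp at hd
  | @insert z M hz ih =>
    have hdM : d ≤ #M := by rw [card_insert_of_notMem hz] at hd; omega
    have hterm : ∀ T ∈ M.powerset,
        (-1) ^ #T * (c + ∑ i ∈ insert z M \ T, w i) ^ d
          + (-1) ^ #(insert z T) * (c + ∑ i ∈ insert z M \ insert z T, w i) ^ d
        = ∑ j ∈ range d, w z ^ (d - j) * d.choose j *
            ((-1) ^ #T * (c + ∑ i ∈ M \ T, w i) ^ j) := by
      intro T hT
      have hzT : z ∉ T := fun h => hz (mem_powerset.mp hT h)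
      rw [insert_sdiff_of_notMem _ hzT, insert_sdiff_insert, sdiff_insert_of_notMem hz,
        sum_insert (fun h => hz (mem_sdiff.mp h).1), card_insert_of_notMem hzT, pow_succ]
      calc _ = (-1) ^ #T * ((c + ∑ i ∈ M \ T, w i + w z) ^ d - (c + ∑ i ∈ M \ T, w i) ^ d) :=
            by ring
        _ = _ := by
          rw [add_pow_sub_pow, mul_sum]
          exact sum_congr rfl fun j _ => by ring
    rw [sum_powerset_insert hz, ← sum_add_distrib, sum_congr rfl hterm, sum_comm]
    refine sum_eq_zero fun j hj => ?_
    rw [← mul_sum, ih ((mem_range.mp hj).trans_le hdM), mul_zero]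

end FiniteDifference

section Hurwitz
open Polynomial
variable {ι R : Type*} [DecidableEq ι] [CommRing R]

def abelWeight (x : R) (w : ι → R) (D : Finset ι) : R :=
  if D = ∅ then 1 else x * (x + ∑ i ∈ D, w i) ^ (#D - 1)

lemma abelWeight_mul_pow (x : R) (w : ι → R) {D M : Finset ι} (hDM : D ⊆ M)
    (hM : M.Nonempty) :
    abelWeight x w D * (x + ∑ i ∈ D, w i) ^ (#M - #D) = x * (x + ∑ i ∈ D, w i) ^ (#M - 1) := by
  rcases D.eq_empty_or_nonempty with rfl | hD
  · rw [abelWeight, if_pos rfl, sum_empty, add_zero, one_mul, card_empty, Nat.sub_zero,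
      ← pow_succ', Nat.sub_add_cancel hM.card_pos]
  · have hle := card_le_card hDM
    have hpos := hD.card_pos
    rw [abelWeight, if_neg hD.ne_empty, mul_assoc, ← pow_add]
    congr 2
    omega

lemma map_abelWeight {S : Type*} [CommRing S] (f : R →+* S) (x : R) (w : ι → R)
    (D : Finset ι) :
    f (abelWeight x w D) = abelWeight (f x) (f ∘ w) D := by
  simp [abelWeight, apply_ite f]

theorem sum_powerset_abelWeight_mul_pow_eq_zero (x : R) (w : ι → R) {M : Finset ι}
    (hM : M.Nonempty) :
    ∑ T ∈ M.powerset, abelWeight x w (M \ T) * (-(x + ∑ i ∈ M, w i) + ∑ i ∈ T, w i) ^ #T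
      = 0 := by
  have hterm : ∀ T ∈ M.powerset,
      abelWeight x w (M \ T) * (-(x + ∑ i ∈ M, w i) + ∑ i ∈ T, w i) ^ #T
        = x * ((-1) ^ #T * (x + ∑ i ∈ M \ T, w i) ^ (#M - 1)) := by
    intro T hT
    have hTM := mem_powerset.mp hT
    have hcard : #T = #M - #(M \ T) := by
      rw [card_sdiff_of_subset hTM]; have := card_le_card hTM; omega
    rw [← sum_sdiff hTM, show -(x + (∑ i ∈ M \ T, w i + ∑ i ∈ T, w i)) + ∑ i ∈ T, w i
        = -1 * (x + ∑ i ∈ M \ T, w i) by ring, mul_pow, mul_left_comm, hcard,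
      abelWeight_mul_pow x w sdiff_subset hM]
    ring
  rw [sum_congr rfl hterm, ← mul_sum,
    sum_powerset_neg_one_pow_card_mul_pow_eq_zero w M x (Nat.sub_one_lt hM.card_pos.ne'),
    mul_zero]

lemma sum_powerset_card_nsmul {β : Type*} [AddCommMonoid β] (M : Finset ι)
    (F : Finset ι → β) :
    ∑ T ∈ M.powerset, #T • F T = ∑ z ∈ M, ∑ T ∈ (M.erase z).powerset, F (insert z T) := by
  calc ∑ T ∈ M.powerset, #T • F T
      = ∑ T ∈ M.powerset, ∑ z ∈ M, if z ∈ T then F T else 0 := by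
        refine sum_congr rfl fun T hT => ?_
        rw [sum_ite_mem, inter_eq_right.mpr (mem_powerset.mp hT), sum_const]
    _ = ∑ z ∈ M, ∑ T ∈ M.powerset, if z ∈ T then F T else 0 := sum_comm
    _ = _ := by
        refine sum_congr rfl fun z hz => ?_
        conv_lhs => rw [← insert_erase hz]
        rw [sum_powerset_insert (notMem_erase z M),
          sum_eq_zero fun T hT => if_neg fun h => notMem_erase z M (mem_powerset.mp hT h),
          zero_add]
        exact sum_congr rfl fun T _ => if_pos (mem_insert_self z T)

noncomputable def hurwitzPoly (x : R) (w : ι → R) (M : Finset ι) : R[X] :=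
  ∑ T ∈ M.powerset, C (abelWeight x w (M \ T)) * (X + C (∑ i ∈ T, w i)) ^ #T

lemma derivative_hurwitzPoly (x : R) (w : ι → R) (M : Finset ι) :
    derivative (hurwitzPoly x w M)
      = ∑ z ∈ M, (hurwitzPoly x w (M.erase z)).comp (X + C (w z)) := by
  have hterm : ∀ T ∈ M.powerset,
      derivative (C (abelWeight x w (M \ T)) * (X + C (∑ i ∈ T, w i)) ^ #T)
        = #T • (C (abelWeight x w (M \ T)) * (X + C (∑ i ∈ T, w i)) ^ (#T - 1)) := by
    intro T _
    rw [derivative_C_mul, derivative_X_add_C_pow, nsmul_eq_mul, C_eq_natCast]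
    ring
  rw [hurwitzPoly, derivative_sum, sum_congr rfl hterm, sum_powerset_card_nsmul]
  refine sum_congr rfl fun z hz => ?_
  rw [hurwitzPoly, Polynomial.sum_comp]
  refine sum_congr rfl fun T hT => ?_
  have hzT : z ∉ T := fun h => notMem_erase z M (mem_powerset.mp hT h)
  rw [card_insert_of_notMem hzT, Nat.add_sub_cancel, sum_insert hzT, sdiff_insert,
    ← erase_sdiff_comm]
  simp only [mul_comp, C_comp, pow_comp, add_comp, X_comp, C_add]
  ring

lemma Polynomial.eq_of_derivative_eq_of_eval_eq [IsAddTorsionFree R] {p q : R[X]} (a : R)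
    (hd : derivative p = derivative q) (he : p.eval a = q.eval a) : p = q := by
  have hconst := eq_C_of_derivative_eq_zero (p := p - q) (by rw [derivative_sub, hd, sub_self])
  have hzero : (p - q).eval a = 0 := by rw [eval_sub, he, sub_self]
  rw [hconst, eval_C] at hzero
  rw [← sub_eq_zero, hconst, hzero, map_zero]

theorem hurwitzPoly_eq [IsAddTorsionFree R] (x : R) (w : ι → R) (M : Finset ι) :
    hurwitzPoly x w M = (X + C (x + ∑ i ∈ M, w i)) ^ #M := by
  induction M using Finset.strongInduction with
  | H M ih =>
  rcases M.eq_empty_or_nonempty with rfl | hM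
  · simp [hurwitzPoly, abelWeight]
  refine eq_of_derivative_eq_of_eval_eq (-(x + ∑ i ∈ M, w i)) ?_ ?_
  · have hshift : ∀ z ∈ M, (hurwitzPoly x w (M.erase z)).comp (X + C (w z))
        = (X + C (x + ∑ i ∈ M, w i)) ^ (#M - 1) := by
      intro z hz
      rw [ih _ (erase_ssubset hz), pow_comp, add_comp, X_comp, C_comp, card_erase_of_mem hz,
        ← add_sum_erase M w hz, C_add, C_add, C_add]
      ring
    rw [derivative_hurwitzPoly, sum_congr rfl hshift, sum_const, derivative_X_add_C_pow,
      nsmul_eq_mul, C_eq_natCast]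
  · rw [hurwitzPoly, eval_finsetSum]
    simp only [eval_mul, eval_C, eval_pow, eval_add, eval_X]
    rw [sum_powerset_abelWeight_mul_pow_eq_zero x w hM, neg_add_cancel, zero_pow hM.card_pos.ne']

theorem sum_powerset_abelWeight_mul_add_pow (x y : R) (w : ι → R) (M : Finset ι) :
    ∑ T ∈ M.powerset, abelWeight x w (M \ T) * (y + ∑ i ∈ T, w i) ^ #T
      = (x + y + ∑ i ∈ M, w i) ^ #M := by
  let φ : MvPolynomial (Option ι) ℤ →+* R := MvPolynomial.eval₂Hom (Int.castRingHom R)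
    fun o => o.elim x w
  have h := congrArg (eval₂ φ y)
    (hurwitzPoly_eq (MvPolynomial.X none) (fun i => MvPolynomial.X (some i)) M)
  simp only [hurwitzPoly, eval₂_finsetSum, eval₂_mul, eval₂_C, eval₂_pow, eval₂_add, eval₂_X,
    map_add, map_sum] at h
  simp only [map_abelWeight, φ, MvPolynomial.eval₂Hom_X', Option.elim_none, Option.elim_some,
    Function.comp_def] at h
  rw [add_comm x y, add_assoc, ← h]

end Hurwitz

section Partitions
variable {ι : Type*} [DecidableEq ι]

def IsPartitionOf (S : Finset ι) (σ : Finset (Finset ι)) : Prop :=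
  (∀ τ ∈ σ, τ.Nonempty) ∧ (∀ τ₁ ∈ σ, ∀ τ₂ ∈ σ, τ₁ ≠ τ₂ → Disjoint τ₁ τ₂) ∧ σ.biUnion id = S

noncomputable def partitions (S : Finset ι) : Finset (Finset (Finset ι)) :=
  S.powerset.powerset.filter (IsPartitionOf S)

namespace IsPartitionOf
variable {S : Finset ι} {σ : Finset (Finset ι)}

lemma subset (h : IsPartitionOf S σ) {τ : Finset ι} (hτ : τ ∈ σ) : τ ⊆ S :=
  h.2.2 ▸ subset_biUnion_of_mem id hτ

lemma notMem (h : IsPartitionOf S σ) {a : ι} (ha : a ∉ S) {τ : Finset ι} (hτ : τ ∈ σ) :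
    a ∉ τ :=
  fun haτ => ha (h.subset hτ haτ)

lemma exists_mem (h : IsPartitionOf S σ) {a : ι} (ha : a ∈ S) : ∃ τ ∈ σ, a ∈ τ := by
  rw [← h.2.2] at ha
  simpa using ha

lemma insert {τ : Finset ι} (h : IsPartitionOf S σ) (hτ : τ.Nonempty) (hτS : Disjoint τ S) :
    IsPartitionOf (τ ∪ S) (insert τ σ) := by
  refine ⟨?_, ?_, by rw [biUnion_insert, h.2.2, id]⟩
  · intro τ' hτ'
    rcases mem_insert.mp hτ' with rfl | hτ'
    exacts [hτ, h.1 τ' hτ']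
  · have hdisj : ∀ τ' ∈ σ, Disjoint τ τ' := fun τ' hτ' => hτS.mono_right (h.subset hτ')
    intro τ₁ h₁ τ₂ h₂ hne
    rcases mem_insert.mp h₁ with e₁ | h₁ <;> rcases mem_insert.mp h₂ with e₂ | h₂
    · exact absurd (e₁.trans e₂.symm) hne
    · exact e₁ ▸ hdisj τ₂ h₂
    · exact e₂ ▸ (hdisj τ₁ h₁).symm
    · exact h.2.1 τ₁ h₁ τ₂ h₂ hne

lemma erase (h : IsPartitionOf S σ) {τ : Finset ι} (hτ : τ ∈ σ) :
    IsPartitionOf (S \ τ) (σ.erase τ) := by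
  refine ⟨fun τ' hτ' => h.1 τ' (mem_of_mem_erase hτ'),
    fun τ₁ h₁ τ₂ h₂ => h.2.1 τ₁ (mem_of_mem_erase h₁) τ₂ (mem_of_mem_erase h₂), ?_⟩
  ext a
  simp only [mem_biUnion, mem_erase, id, mem_sdiff]
  constructor
  · rintro ⟨τ', ⟨hne, hτ'⟩, haτ'⟩
    exact ⟨h.subset hτ' haτ', disjoint_left.mp (h.2.1 τ' hτ' τ hτ hne) haτ'⟩
  · rintro ⟨haS, haτ⟩
    obtain ⟨τ', hτ', haτ'⟩ := h.exists_mem haS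
    exact ⟨τ', ⟨fun h => haτ (h ▸ haτ'), hτ'⟩, haτ'⟩

end IsPartitionOf

lemma mem_partitions {S : Finset ι} {σ : Finset (Finset ι)} :
    σ ∈ partitions S ↔ IsPartitionOf S σ := by
  rw [partitions, mem_filter, mem_powerset, and_iff_right_iff_imp]
  exact fun h τ hτ => mem_powerset.mpr (h.subset hτ)

lemma partitions_empty : partitions (∅ : Finset ι) = {∅} := by
  ext σ
  rw [mem_partitions, mem_singleton]
  constructor
  · intro h
    refine eq_empty_of_forall_notMem fun τ hτ => ?_
    obtain ⟨a, ha⟩ := h.1 τ hτ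
    exact h.notMem (notMem_empty a) hτ ha
  · rintro rfl
    exact ⟨by simp, by simp, rfl⟩

lemma isPartitionOf_insert_insert {S B : Finset ι} {σ : Finset (Finset ι)} {e : ι} (he : e ∈ S)
    (hB : B ⊆ S.erase e) (hσ : IsPartitionOf (S.erase e \ B) σ) :
    IsPartitionOf S (insert (insert e B) σ) := by
  have hS : insert e B ∪ (S.erase e \ B) = S := by
    rw [insert_union, union_sdiff_of_subset hB, insert_erase he]
  have hdisj : Disjoint (insert e B) (S.erase e \ B) :=
    disjoint_insert_left.mpr ⟨fun h => notMem_erase e S (mem_sdiff.mp h).1, disjoint_sdiff⟩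
  exact hS ▸ hσ.insert (insert_nonempty e B) hdisj

theorem sum_partitions_eq_sum_powerset_erase {β : Type*} [AddCommMonoid β] {S : Finset ι}
    {e : ι} (he : e ∈ S) (f : Finset (Finset ι) → β) :
    ∑ σ ∈ partitions S, f σ
      = ∑ B ∈ (S.erase e).powerset,
          ∑ σ ∈ partitions (S.erase e \ B), f (insert (insert e B) σ) := by
  have heσ : ∀ p ∈ (S.erase e).powerset.sigma (fun B => partitions (S.erase e \ B)),
      ∀ τ ∈ p.2, e ∉ τ := fun p hp _ =>
    (mem_partitions.mp (mem_sigma.mp hp).2).notMem fun h => notMem_erase e S (mem_sdiff.mp h).1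
  rw [sum_sigma' (f := fun B σ => f (insert (insert e B) σ))]
  refine (sum_nbij (fun p : (_ : Finset ι) × Finset (Finset ι) => insert (insert e p.1) p.2)
    ?_ ?_ ?_ fun _ _ => rfl).symm
  · rintro ⟨B, σ⟩ hp
    obtain ⟨hB, hσ⟩ := mem_sigma.mp hp
    exact mem_partitions.mpr (isPartitionOf_insert_insert he (mem_powerset.mp hB)
      (mem_partitions.mp hσ))
  · rintro ⟨B₁, σ₁⟩ hp₁ ⟨B₂, σ₂⟩ hp₂ heq
    have heB : ∀ {B}, B ∈ (S.erase e).powerset → e ∉ B :=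
      fun hB h => notMem_erase e S (mem_powerset.mp hB h)
    have hB₁ : B₁ ∈ (S.erase e).powerset := (mem_sigma.mp hp₁).1
    have hB₂ : B₂ ∈ (S.erase e).powerset := (mem_sigma.mp hp₂).1
    replace heq : insert (insert e B₁) σ₁ = insert (insert e B₂) σ₂ := heq
    have hblock : insert e B₁ = insert e B₂ := by
      rcases mem_insert.mp (heq ▸ mem_insert_self (insert e B₁) σ₁) with h | h
      · exact h
      · exact absurd (mem_insert_self e B₁) (heσ _ hp₂ _ h)
    have hB : B₁ = B₂ := by
      rw [← erase_insert (heB hB₁), hblock, erase_insert (heB hB₂)]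
    subst hB
    have h₁ : insert e B₁ ∉ σ₁ := fun h => heσ _ hp₁ _ h (mem_insert_self e B₁)
    have h₂ : insert e B₁ ∉ σ₂ := fun h => heσ _ hp₂ _ h (mem_insert_self e B₁)
    rw [← erase_insert h₁, heq, erase_insert h₂]
  · intro σ hσ
    have hσ := mem_partitions.mp hσ
    obtain ⟨τ, hτ, heτ⟩ := hσ.exists_mem he
    have hrest : S.erase e \ τ.erase e = S \ τ := by
      ext a
      by_cases hae : a = e
      · simp [hae, heτ]
      · simp [hae]
    refine ⟨⟨τ.erase e, σ.erase τ⟩, mem_sigma.mpr ⟨?_, ?_⟩, ?_⟩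
    · exact mem_powerset.mpr (erase_subset_erase e (hσ.subset hτ))
    · exact mem_partitions.mpr (hrest ▸ hσ.erase hτ)
    · simp only [insert_erase heτ, insert_erase hτ]

end Partitions

section GeneratingFunction
open Polynomial
variable {ι A : Type*} [DecidableEq ι] [CommRing A]

theorem sum_partitions_pow_card_mul_prod_eq_abelWeight (t : A) (x : ι → A) (S : Finset ι) :
    ∑ σ ∈ partitions S, t ^ #σ * ∏ τ ∈ σ, (∑ i ∈ τ, x i) ^ (#τ - 1) = abelWeight t x S := by
  induction S using Finset.strongInduction with
  | H S ih =>
  rcases S.eq_empty_or_nonempty with rfl | ⟨e, he⟩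
  · simp [partitions_empty, abelWeight]
  have hblock : ∀ B ∈ (S.erase e).powerset,
      ∑ σ ∈ partitions (S.erase e \ B), t ^ #(insert (insert e B) σ) *
          ∏ τ ∈ insert (insert e B) σ, (∑ i ∈ τ, x i) ^ (#τ - 1)
        = t * (abelWeight t x (S.erase e \ B) * (x e + ∑ i ∈ B, x i) ^ #B) := by
    intro B hB
    have heB : e ∉ B := fun h => notMem_erase e S (mem_powerset.mp hB h)
    rw [← ih _ (sdiff_subset.trans_ssubset (erase_ssubset he)), sum_mul, mul_sum]
    refine sum_congr rfl fun σ hσ => ?_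
    have hnot : insert e B ∉ σ := fun h =>
      (mem_partitions.mp hσ).notMem (fun h' => notMem_erase e S (mem_sdiff.mp h').1) h
        (mem_insert_self e B)
    rw [card_insert_of_notMem hnot, prod_insert hnot, sum_insert heB, card_insert_of_notMem heB,
      Nat.add_sub_cancel]
    ring
  rw [sum_partitions_eq_sum_powerset_erase he, sum_congr rfl hblock, ← mul_sum,
    sum_powerset_abelWeight_mul_add_pow, abelWeight, if_neg (ne_empty_of_mem he),
    ← add_sum_erase S x he, card_erase_of_mem he, add_assoc]

theorem sum_partitions_filter_card_eq (x : ι → A) {S : Finset ι} (hS : S.Nonempty) {k : ℕ}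
    (hk : 1 ≤ k) :
    ∑ σ ∈ (partitions S).filter (fun σ => #σ = k), ∏ τ ∈ σ, (∑ i ∈ τ, x i) ^ (#τ - 1)
      = (#S - 1).choose (k - 1) * (∑ i ∈ S, x i) ^ (#S - k) := by
  have h := congrArg (coeff · k)
    (sum_partitions_pow_card_mul_prod_eq_abelWeight (X : A[X]) (C ∘ x) S)
  simp only [Function.comp_apply, ← map_sum, ← map_pow, ← map_prod, finsetSum_coeff] at h
  simp only [mul_comm (X ^ _), coeff_C_mul_X_pow, eq_comm (a := k), ← sum_filter] at h
  rw [h, abelWeight, if_neg hS.ne_empty]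
  obtain ⟨k, rfl⟩ := Nat.exists_eq_add_of_le' hk
  simp only [Function.comp_apply, ← map_sum]
  rw [coeff_X_mul, coeff_X_add_C_pow, Nat.add_sub_cancel,
    show #S - 1 - k = #S - (k + 1) by omega, mul_comm]

end GeneratingFunction

/-- First partition identity: summing, over all partitions of `{1,...,n}` into `k` blocks,
the product over blocks `τ` of `(s_τ)^{|τ|-1}` gives `C(n-1,k-1) (x₁+⋯+xₙ)^{n-k}`. -/
theorem first_partition_identity (n k : ℕ) (hk : 1 ≤ k) (hkn : k ≤ n)
    {A : Type*} [CommRing A] (x : Fin n → A) :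
    ∑ σ ∈ (univ : Finset (Finset (Finset (Fin n)))).filter (fun σ => IsPartitionInto σ k),
      ∏ τ ∈ σ, (∑ i ∈ τ, x i) ^ (τ.card - 1)
    = ((n - 1).choose (k - 1) : A) * (∑ i, x i) ^ (n - k) := by
  have hne : (univ : Finset (Fin n)).Nonempty := univ_nonempty_iff.mpr ⟨⟨0, by omega⟩⟩
  have hfilter : univ.filter (fun σ => IsPartitionInto σ k)
      = (partitions (univ : Finset (Fin n))).filter (fun σ => #σ = k) := by
    ext σ
    rw [mem_filter, mem_filter, mem_partitions]
    simp only [mem_univ, true_and, IsPartitionInto, IsPartitionOf, and_assoc]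
  rw [hfilter, sum_partitions_filter_card_eq x hne hk, card_univ, Fintype.card_fin]
end

section
/- Let F_n be free on a_1,...,a_n and let σ_n ∈ Aut(F_n) be the involution sending each a_i to a_i^{-1}. There is an isomorphism from Aut(∗_{i=0}^n Z_2, x_0) — the subgroup of automorphisms of the free product of n+1 copies of Z_2 fixing the generator x_0 of the first factor — onto the centralizer C_{Aut(F_n)}(σ_n), obtained by restricting automorphisms to the characteristic index-2 subgroup freely generated by a_i = x_0 x_i. -/
/-- The cyclic group of order 2, written multiplicatively. -/
abbrev Z2 : Type := Multiplicative (ZMod 2)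

/-- `G = ∗_{i=0}^{n} ℤ₂`, the free product of `n+1` copies of `ℤ₂`. -/
abbrev Gp (n : ℕ) : Type := Monoid.CoprodI (fun _ : Fin (n + 1) => Z2)

/-- The generator `xᵢ` of the `i`-th free factor of `Gp n`. -/
def xg (n : ℕ) (i : Fin (n + 1)) : Gp n :=
  Monoid.CoprodI.of (M := fun _ : Fin (n + 1) => Z2) (i := i) (Multiplicative.ofAdd 1)

/-- The embedding of the free group `F_n` onto the even-length (characteristic, index 2)
subgroup of `Gp n`, sending the `i`-th generator to `aᵢ = x₀ xᵢ`. -/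
def psi (n : ℕ) : FreeGroup (Fin n) →* Gp n :=
  FreeGroup.lift (fun i : Fin n => xg n 0 * xg n i.succ)


/-!
Writing `t` for the generator of `ℤ₂`, the assignments `x₀ ↦ t`, `x_{j+1} ↦ aⱼ⁻¹ t` and
`aⱼ ↦ x₀ x_{j+1}`, `t ↦ x₀` are mutually inverse isomorphisms `G ≅ Fₙ ⋊ ℤ₂`, with `ℤ₂` acting
by `σₙ`. An automorphism of `G` maps each involution `xᵢ` to an involution, and involutions of
`Fₙ ⋊ ℤ₂` lie outside `Fₙ` because free groups are torsion-free; so it preserves the parity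
`G → ℤ₂` and restricts to its kernel `ψ(Fₙ)`. Conjugation by `x₀` acts on `ψ(Fₙ)` as `σₙ`,
so restrictions of automorphisms fixing `x₀` commute with `σₙ`, and they determine the
automorphism because `ψ(Fₙ)` and `x₀` generate `G`. Conversely, an `α` commuting with `σₙ`
extends to `α × id` on `Fₙ ⋊ ℤ₂`, which fixes `t = x₀`.
-/

open Multiplicative SemidirectProduct

namespace Z2

def gen : Z2 := ofAdd 1

theorem eq_one_or_eq_gen (z : Z2) : z = 1 ∨ z = gen := by
  revert z; decide

theorem gen_ne_one : gen ≠ 1 := by decide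

theorem gen_mul_gen : gen * gen = 1 := by decide

def lift {M : Type*} [Monoid M] (m : M) (hm : m * m = 1) : Z2 →* M where
  toFun z := if z = 1 then 1 else m
  map_one' := if_pos rfl
  map_mul' x y := by
    rcases eq_one_or_eq_gen x with rfl | rfl <;> rcases eq_one_or_eq_gen y with rfl | rfl <;>
      simp [gen_mul_gen, gen_ne_one, hm]

@[simp]
theorem lift_gen {M : Type*} [Monoid M] (m : M) (hm : m * m = 1) : lift m hm gen = m :=
  if_neg (t := (1 : M)) gen_ne_one

theorem hom_ext {M : Type*} [Monoid M] {f g : Z2 →* M} (h : f gen = g gen) : f = g :=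
  MonoidHom.ext fun z => by rcases eq_one_or_eq_gen z with rfl | rfl <;> simp [h]

end Z2

namespace FreeGroup

variable (α : Type*)

def invertGenerators : MulAut (FreeGroup α) :=
  have h : (lift fun a => (of a)⁻¹).comp (lift fun a => (of a)⁻¹) = MonoidHom.id _ := by
    ext; simp
  MonoidHom.toMulEquiv _ _ h h

variable {α}

@[simp]
theorem invertGenerators_of (a : α) : invertGenerators α (of a) = (of a)⁻¹ := by
  simp [invertGenerators]

theorem eq_invertGenerators {σ : MulAut (FreeGroup α)} (hσ : ∀ a, σ (of a) = (of a)⁻¹) :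
    σ = invertGenerators α :=
  MulEquiv.toMonoidHom_injective <| ext_hom _ _ fun a => by simp [hσ]

theorem invertGenerators_mul_self : invertGenerators α * invertGenerators α = 1 :=
  MulEquiv.toMonoidHom_injective <| ext_hom _ _ fun a => by simp

variable (α) in
def invertAction : Z2 →* MulAut (FreeGroup α) :=
  Z2.lift (invertGenerators α) invertGenerators_mul_self

@[simp]
theorem invertAction_gen : invertAction α Z2.gen = invertGenerators α := Z2.lift_gen _ _

end FreeGroup

theorem SemidirectProduct.right_ne_one_of_sq_eq_one {N G : Type*} [Group N] [Group G]
    [IsMulTorsionFree N] {φ : G →* MulAut N} {h : N ⋊[φ] G} (hsq : h ^ 2 = 1) (hne : h ≠ 1) :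
    h.right ≠ 1 := by
  intro hr
  have hinl : h = inl h.left := by ext <;> simp [hr]
  rw [hinl, ← map_pow, ← (inl : N →* N ⋊[φ] G).map_one, inl_injective.eq_iff, sq_eq_one] at hsq
  exact hne (by rw [hinl, hsq, map_one])

section

variable {n : ℕ}

abbrev SemidirectZ2 (n : ℕ) : Type := FreeGroup (Fin n) ⋊[FreeGroup.invertAction (Fin n)] Z2

theorem xg_mul_self (i : Fin (n + 1)) : xg n i * xg n i = 1 := by
  rw [xg, ← map_mul, show (ofAdd 1 : Z2) * ofAdd 1 = 1 by decide, map_one]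

theorem xg_mul_xg_mul (i : Fin (n + 1)) (g : Gp n) : xg n i * (xg n i * g) = g := by
  rw [← mul_assoc, xg_mul_self, one_mul]

theorem xg_inv (i : Fin (n + 1)) : (xg n i)⁻¹ = xg n i :=
  inv_eq_of_mul_eq_one_right (xg_mul_self i)

theorem psi_of (j : Fin n) : psi n (FreeGroup.of j) = xg n 0 * xg n j.succ :=
  FreeGroup.lift_apply_of

theorem psi_comp_invertGenerators :
    (psi n).comp (FreeGroup.invertGenerators (Fin n)).toMonoidHom =
      (MulAut.conj (xg n 0)).toMonoidHom.comp (psi n) :=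
  FreeGroup.ext_hom _ _ fun j => by simp [psi_of, xg_inv, xg_mul_xg_mul]

theorem psi_invertGenerators (w : FreeGroup (Fin n)) :
    psi n (FreeGroup.invertGenerators (Fin n) w) = xg n 0 * psi n w * xg n 0 := by
  simpa [xg_inv] using DFunLike.congr_fun psi_comp_invertGenerators w

def semidirectToGp (n : ℕ) : SemidirectZ2 n →* Gp n :=
  SemidirectProduct.lift (psi n) (Z2.lift (xg n 0) (xg_mul_self 0)) fun g => by
    rcases Z2.eq_one_or_eq_gen g with rfl | rfl
    · ext; simp
    · simpa using psi_comp_invertGenerators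

-- `x₀ ↦ (1, t)` and `x_{j+1} ↦ (aⱼ⁻¹, t)`, so that `aⱼ = x₀ x_{j+1} ↦ (aⱼ, 1)`.
def xgLeft : Fin (n + 1) → FreeGroup (Fin n) := Fin.cases 1 fun j => (FreeGroup.of j)⁻¹

theorem invertGenerators_xgLeft (i : Fin (n + 1)) :
    FreeGroup.invertGenerators (Fin n) (xgLeft i) = (xgLeft i)⁻¹ := by
  cases i using Fin.cases <;> simp [xgLeft]

theorem mk_xgLeft_gen_mul_self (i : Fin (n + 1)) :
    (⟨xgLeft i, Z2.gen⟩ * ⟨xgLeft i, Z2.gen⟩ : SemidirectZ2 n) = 1 := by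
  ext
  · simp [invertGenerators_xgLeft]
  · exact Z2.gen_mul_gen

def gpToSemidirect (n : ℕ) : Gp n →* SemidirectZ2 n :=
  Monoid.CoprodI.lift fun i => Z2.lift ⟨xgLeft i, Z2.gen⟩ (mk_xgLeft_gen_mul_self i)

theorem gpToSemidirect_xg (i : Fin (n + 1)) : gpToSemidirect n (xg n i) = ⟨xgLeft i, Z2.gen⟩ :=
  (Monoid.CoprodI.lift_of _ _).trans (Z2.lift_gen _ _)

theorem semidirectToGp_comp_gpToSemidirect :
    (semidirectToGp n).comp (gpToSemidirect n) = MonoidHom.id _ := by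
  refine Monoid.CoprodI.ext_hom _ _ fun i => Z2.hom_ext ?_
  change semidirectToGp n (gpToSemidirect n (xg n i)) = xg n i
  rw [gpToSemidirect_xg, mk_eq_inl_mul_inr, map_mul, semidirectToGp, lift_inl, lift_inr,
    Z2.lift_gen]
  cases i using Fin.cases <;> simp [xgLeft, psi_of, xg_inv, mul_assoc, xg_mul_self]

theorem gpToSemidirect_comp_semidirectToGp :
    (gpToSemidirect n).comp (semidirectToGp n) = MonoidHom.id _ := by
  refine SemidirectProduct.hom_ext (FreeGroup.ext_hom _ _ fun j => ?_) (Z2.hom_ext ?_)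
  · simp only [MonoidHom.comp_apply, semidirectToGp, lift_inl, psi_of, map_mul, gpToSemidirect_xg]
    ext <;> simp [xgLeft, Z2.gen_mul_gen]
  · simp [semidirectToGp, gpToSemidirect_xg, xgLeft]

def gpEquivSemidirect (n : ℕ) : Gp n ≃* SemidirectZ2 n :=
  MonoidHom.toMulEquiv _ _ semidirectToGp_comp_gpToSemidirect gpToSemidirect_comp_semidirectToGp

theorem gpEquivSemidirect_symm_inl (w : FreeGroup (Fin n)) :
    (gpEquivSemidirect n).symm (inl w) = psi n w :=
  show semidirectToGp n (inl w) = psi n w from lift_inl _ _ _ _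

theorem gpEquivSemidirect_xg_zero : gpEquivSemidirect n (xg n 0) = inr Z2.gen :=
  (gpToSemidirect_xg 0).trans (by ext <;> rfl)

theorem psi_injective : Function.Injective (psi n) := by
  intro v w h
  simpa [← gpEquivSemidirect_symm_inl] using h

def parity (n : ℕ) : Gp n →* Z2 := rightHom.comp (gpEquivSemidirect n).toMonoidHom

theorem range_psi : (psi n).range = (parity n).ker := by
  ext g
  constructor
  · rintro ⟨w, rfl⟩
    simp [parity, ← gpEquivSemidirect_symm_inl]
  · intro hg
    refine ⟨(gpEquivSemidirect n g).left, ?_⟩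
    rw [← gpEquivSemidirect_symm_inl, MulEquiv.symm_apply_eq]
    ext
    · rfl
    · exact hg.symm

theorem parity_xg (i : Fin (n + 1)) : parity n (xg n i) = Z2.gen :=
  congrArg SemidirectProduct.right (gpToSemidirect_xg i)

theorem xg_ne_one (i : Fin (n + 1)) : xg n i ≠ 1 := fun h =>
  Z2.gen_ne_one (by rw [← parity_xg i, h, map_one])

theorem parity_comp_mulAut (φ : MulAut (Gp n)) : (parity n).comp φ.toMonoidHom = parity n := by
  refine Monoid.CoprodI.ext_hom _ _ fun i => Z2.hom_ext ?_
  change parity n (φ (xg n i)) = parity n (xg n i)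
  rw [parity_xg]
  refine (Z2.eq_one_or_eq_gen _).resolve_left (right_ne_one_of_sq_eq_one ?_ ?_)
  · rw [sq, ← map_mul, ← map_mul, xg_mul_self, map_one, map_one]
  · simpa using xg_ne_one i

instance : (psi n).range.Characteristic :=
  Subgroup.characteristic_iff_comap_eq.mpr fun φ => by
    rw [range_psi, MonoidHom.comap_ker, parity_comp_mulAut]

noncomputable def restrictHom (n : ℕ) : MulAut (Gp n) →* MulAut (FreeGroup (Fin n)) :=
  (MulAut.congr (MonoidHom.ofInjective psi_injective).symm).toMonoidHom.comp
    (MulAut.characteristic (psi n).range)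

theorem psi_restrictHom_apply (φ : MulAut (Gp n)) (w : FreeGroup (Fin n)) :
    psi n (restrictHom n φ w) = φ (psi n w) := by
  simp [restrictHom, MonoidHom.apply_ofInjective_symm, MonoidHom.ofInjective_apply]

theorem hom_ext_psi_xg_zero {M : Type*} [Group M] {f g : Gp n →* M}
    (hpsi : f.comp (psi n) = g.comp (psi n)) (hx : f (xg n 0) = g (xg n 0)) : f = g := by
  have h : f.comp (gpEquivSemidirect n).symm.toMonoidHom =
      g.comp (gpEquivSemidirect n).symm.toMonoidHom := by
    apply SemidirectProduct.hom_ext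
    · refine MonoidHom.ext fun w => ?_
      simpa [gpEquivSemidirect_symm_inl] using DFunLike.congr_fun hpsi w
    · refine Z2.hom_ext ?_
      simpa [← gpEquivSemidirect_xg_zero] using hx
  refine MonoidHom.ext fun g' => ?_
  simpa using DFunLike.congr_fun h (gpEquivSemidirect n g')

theorem restrictHom_domRestrict_stabilizer_injective :
    Function.Injective
      ((restrictHom n).domRestrict (MulAction.stabilizer (MulAut (Gp n)) (xg n 0))) := by
  refine (injective_iff_map_eq_one _).mpr fun ⟨φ, hφ⟩ h1 => ?_
  change restrictHom n φ = 1 at h1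
  refine Subtype.ext <| MulEquiv.toMonoidHom_injective <| hom_ext_psi_xg_zero ?_ hφ
  refine MonoidHom.ext fun w => ?_
  simp [← psi_restrictHom_apply, h1]

theorem restrictHom_mem_centralizer {φ : MulAut (Gp n)} (hφ : φ (xg n 0) = xg n 0) :
    restrictHom n φ ∈ Subgroup.centralizer {FreeGroup.invertGenerators (Fin n)} := by
  refine Subgroup.mem_centralizer_singleton_iff.mpr (MulEquiv.ext fun w => psi_injective ?_)
  simp only [MulAut.mul_apply, psi_restrictHom_apply, psi_invertGenerators, map_mul, hφ]

noncomputable def extendAut {α : MulAut (FreeGroup (Fin n))}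
    (hα : α ∈ Subgroup.centralizer {FreeGroup.invertGenerators (Fin n)}) : MulAut (Gp n) :=
  (MulAut.congr (gpEquivSemidirect n)).symm <|
    SemidirectProduct.congr α (MulEquiv.refl Z2) fun g => by
      rcases Z2.eq_one_or_eq_gen g with rfl | rfl
      · ext; simp
      · change α * _ = _ * α
        simpa using Subgroup.mem_centralizer_singleton_iff.mp hα

theorem extendAut_xg_zero {α : MulAut (FreeGroup (Fin n))}
    (hα : α ∈ Subgroup.centralizer {FreeGroup.invertGenerators (Fin n)}) :
    extendAut hα (xg n 0) = xg n 0 := by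
  rw [extendAut, MulAut.congr_symm_apply, MulEquiv.trans_apply, gpEquivSemidirect_xg_zero,
    MulEquiv.trans_apply, MulEquiv.symm_apply_eq, gpEquivSemidirect_xg_zero]
  ext <;> simp

theorem restrictHom_extendAut {α : MulAut (FreeGroup (Fin n))}
    (hα : α ∈ Subgroup.centralizer {FreeGroup.invertGenerators (Fin n)}) :
    restrictHom n (extendAut hα) = α := by
  refine MulEquiv.ext fun w => psi_injective ?_
  rw [psi_restrictHom_apply, extendAut, MulAut.congr_symm_apply, MulEquiv.trans_apply,
    ← gpEquivSemidirect_symm_inl, MulEquiv.apply_symm_apply, MulEquiv.trans_apply,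
    ← gpEquivSemidirect_symm_inl]
  rfl

theorem map_restrictHom_stabilizer :
    (MulAction.stabilizer (MulAut (Gp n)) (xg n 0)).map (restrictHom n) =
      Subgroup.centralizer {FreeGroup.invertGenerators (Fin n)} := by
  refine le_antisymm ?_ fun α hα => ⟨extendAut hα, extendAut_xg_zero hα, restrictHom_extendAut hα⟩
  rintro _ ⟨φ, hφ, rfl⟩
  exact restrictHom_mem_centralizer hφ

end

/-- `Aut(∗_{i=0}^n ℤ₂, x₀)`, the subgroup of automorphisms of the free product fixing the
generator `x₀` of the first factor, is isomorphic to the centralizer in `Aut(F_n)` of the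
involution `σₙ : aᵢ ↦ aᵢ⁻¹`, via restriction to the characteristic index-2 subgroup
freely generated by the `aᵢ = x₀ xᵢ` (i.e. along the embedding `ψ`). -/
theorem aut_fixing_x0_iso_centralizer (n : ℕ)
    (σ : MulAut (FreeGroup (Fin n)))
    (hσ : ∀ i : Fin n, σ (FreeGroup.of i) = (FreeGroup.of i)⁻¹) :
    ∃ Φ : MulAction.stabilizer (MulAut (Gp n)) (xg n 0) ≃*
        Subgroup.centralizer ({σ} : Set (MulAut (FreeGroup (Fin n)))),
      ∀ (φ : MulAction.stabilizer (MulAut (Gp n)) (xg n 0)) (w : FreeGroup (Fin n)),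
        psi n (((Φ φ : MulAut (FreeGroup (Fin n)))) w) = (φ : MulAut (Gp n)) (psi n w) := by
  obtain rfl := FreeGroup.eq_invertGenerators hσ
  have hrange := (MonoidHom.domRestrict_range _ _).trans (map_restrictHom_stabilizer (n := n))
  refine ⟨(MonoidHom.ofInjective restrictHom_domRestrict_stabilizer_injective).trans
    (MulEquiv.subgroupCongr hrange), fun φ w => ?_⟩
  exact psi_restrictHom_apply φ.1 w
end
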